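/- arXiv:1508.06341 — 5 statements merged into one kernel-verified Lean document; each statement's English description precedes it below -/
import Mathlib

section
/- Suppose an m×m matrix X satisfies (i) 𝒢(X) ≥ 0, (ii) 0 ≤ X ≤ G, and (iii) I − Σ_{v=1}^{N} Σ_{j=0}^{v-1} (X^{v-1-j})ᵀ ⊗ (A_v X^{j}) is a nonsingular M-matrix. Let Z be an m×m matrix with 0 ≤ Z ≤ X, let Y satisfy Σ_{v=1}^{N} Σ_{j=0}^{v-1} A_v Z^{j} (Y − X) Z^{v-1-j} − (Y − X) = −𝒢(X), and let Ŷ satisfy Σ_{v=1}^{N} Σ_{j=0}^{v-1} A_v X^{j} (Ŷ − X) X^{v-1-j} − (Ŷ − X) = −𝒢(X). Then Y ≤ Ŷ entrywise. -/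
open Matrix Finset Kronecker
open scoped ENNReal

/-- Spectral radius of a real matrix: the spectral radius of its complexification. -/
noncomputable def specRad {n : Type*} [Fintype n] [DecidableEq n] (B : Matrix n n ℝ) : ℝ≥0∞ :=
  spectralRadius ℂ (B.map (algebraMap ℝ ℂ))

/-- `M` is a nonsingular M-matrix: a Z-matrix of the form `s • I - B` with `B ≥ 0`
entrywise and `s` greater than the spectral radius of `B`. -/
def IsNonsingMMatrix {n : Type*} [Fintype n] [DecidableEq n] (M : Matrix n n ℝ) : Prop :=
  (∀ i j, i ≠ j → M i j ≤ 0) ∧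
  ∃ s : ℝ, ∃ B : Matrix n n ℝ, (∀ i j, 0 ≤ B i j) ∧
    M = s • (1 : Matrix n n ℝ) - B ∧ specRad B < ENNReal.ofReal s

set_option linter.unusedSectionVars false
set_option linter.unusedVariables false
set_option maxHeartbeats 1000000

section Entrywise
variable {n : Type*} [Fintype n] [DecidableEq n]

/-- entrywise nonneg product -/
lemma entmul_nonneg {P Q : Matrix n n ℝ} (hP : ∀ i j, 0 ≤ P i j) (hQ : ∀ i j, 0 ≤ Q i j) :
    ∀ i j, 0 ≤ (P * Q) i j := fun i j => by
  rw [Matrix.mul_apply]; exact Finset.sum_nonneg fun k _ => mul_nonneg (hP i k) (hQ k j)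

lemma entmul_le {P Q P' Q' : Matrix n n ℝ} (hP : ∀ i j, 0 ≤ P i j) (hQ : ∀ i j, 0 ≤ Q i j)
    (hPP : ∀ i j, P i j ≤ P' i j) (hQQ : ∀ i j, Q i j ≤ Q' i j) :
    ∀ i j, (P * Q) i j ≤ (P' * Q') i j := fun i j => by
  rw [Matrix.mul_apply, Matrix.mul_apply]
  exact Finset.sum_le_sum fun k _ =>
    mul_le_mul (hPP i k) (hQQ k j) (hQ k j) (le_trans (hP i k) (hPP i k))

lemma entpow_nonneg {P : Matrix n n ℝ} (hP : ∀ i j, 0 ≤ P i j) (k : ℕ) :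
    ∀ i j, 0 ≤ (P ^ k) i j := by
  induction k with
  | zero => intro i j; simp [Matrix.one_apply]; positivity
  | succ k ih => rw [pow_succ]; exact entmul_nonneg ih hP

lemma entpow_le {P Q : Matrix n n ℝ} (hP : ∀ i j, 0 ≤ P i j)
    (hPQ : ∀ i j, P i j ≤ Q i j) (k : ℕ) :
    ∀ i j, (P ^ k) i j ≤ (Q ^ k) i j := by
  induction k with
  | zero => intro i j; simp
  | succ k ih =>
    rw [pow_succ, pow_succ]
    exact entmul_le (entpow_nonneg hP k) hP ih hPQ

end Entrywise


variable {m : ℕ}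

def vec (W : Matrix (Fin m) (Fin m) ℝ) : Fin m × Fin m → ℝ := fun p => W p.2 p.1

lemma sum_mulVec' {n : Type*} [Fintype n]
    {ι : Type*} (s : Finset ι) (f : ι → Matrix n n ℝ) (v : n → ℝ) :
    (∑ x ∈ s, f x).mulVec v = ∑ x ∈ s, (f x).mulVec v := by
  ext i
  simp only [Matrix.mulVec, dotProduct, Finset.sum_apply, Matrix.sum_apply, Finset.sum_mul]
  exact Finset.sum_comm

lemma kron_mulVec (C M W : Matrix (Fin m) (Fin m) ℝ) :
    (Mᵀ ⊗ₖ C).mulVec (_root_.vec W) = _root_.vec (C * W * M) := by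
  ext ⟨i₁, i₂⟩
  simp only [Matrix.mulVec, dotProduct, _root_.vec, Matrix.mul_apply,
    Fintype.sum_prod_type, Matrix.kroneckerMap_apply, Matrix.transpose_apply,
    Finset.sum_mul, Finset.mul_sum]
  congr 1; ext j₁; congr 1; ext j₂
  ring


section Spec
variable {n : Type*} [Fintype n] [DecidableEq n]

attribute [local instance] Matrix.linftyOpNormedRing Matrix.linftyOpNormedAlgebra
  Matrix.linftyOpNormedAddCommGroup

lemma specRad_add_smul_one_le (B : Matrix n n ℝ) {t : ℝ} (ht : 0 ≤ t) :
    specRad (B + t • 1) ≤ specRad B + ENNReal.ofReal t := by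
  have hmap : (B + t • (1 : Matrix n n ℝ)).map (algebraMap ℝ ℂ) =
      B.map (algebraMap ℝ ℂ) + algebraMap ℂ (Matrix n n ℂ) (t : ℂ) := by
    ext i j
    simp only [Matrix.map_apply, Matrix.add_apply, Matrix.smul_apply, Matrix.algebraMap_matrix_apply]
    by_cases h : i = j <;> simp [h, Matrix.one_apply, Matrix.add_apply]
  rw [specRad, hmap, spectralRadius]
  apply iSup₂_le
  intro k hk
  rw [← spectrum.add_singleton_eq, Set.add_singleton] at hk
  obtain ⟨μ, hμ, rfl⟩ := hk
  calc (‖μ + (t : ℂ)‖₊ : ℝ≥0∞) ≤ (‖μ‖₊ : ℝ≥0∞) + (‖(t : ℂ)‖₊ : ℝ≥0∞) := by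
        rw [← ENNReal.coe_add]; exact ENNReal.coe_le_coe.mpr (nnnorm_add_le _ _)
    _ ≤ specRad B + ENNReal.ofReal t := by
        refine add_le_add ?_ ?_
        · exact le_iSup₂ (f := fun k (_ : k ∈ spectrum ℂ (B.map (algebraMap ℝ ℂ))) =>
            (‖k‖₊ : ℝ≥0∞)) μ hμ
        · rw [Complex.nnnorm_real]
          exact le_of_eq (Real.enorm_eq_ofReal ht)

lemma norm_entry_le {A : Matrix n n ℂ} (i j : n) : ‖A i j‖ ≤ ‖A‖ := by
  rw [Matrix.linfty_opNorm_def]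
  have h1 : ‖A i j‖₊ ≤ ∑ j', ‖A i j'‖₊ :=
    Finset.single_le_sum (f := fun j' => ‖A i j'‖₊) (fun _ _ => zero_le) (Finset.mem_univ j)
  have h2 : (∑ j', ‖A i j'‖₊) ≤ Finset.univ.sup fun i => ∑ j', ‖A i j'‖₊ :=
    Finset.le_sup (f := fun i => ∑ j', ‖A i j'‖₊) (Finset.mem_univ i)
  exact_mod_cast h1.trans h2

lemma exists_entry_bound (Q : Matrix n n ℝ) {s : ℝ} (h : specRad Q < ENNReal.ofReal s) :
    ∃ c θ : ℝ, 1 ≤ c ∧ 0 < θ ∧ θ < s ∧ ∀ k i j, |(Q ^ k) i j| ≤ c * θ ^ k := by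
  haveI : CompleteSpace (Matrix n n ℂ) := FiniteDimensional.complete ℂ _
  set Qc := Q.map (algebraMap ℝ ℂ) with hQc
  have hs : 0 < s := by
    by_contra hs
    rw [ENNReal.ofReal_eq_zero.mpr (le_of_not_gt hs)] at h
    exact (not_lt_of_ge zero_le) h
  have hpow : ∀ k : ℕ, (Q ^ k).map (algebraMap ℝ ℂ) = Qc ^ k := by
    intro k
    rw [hQc, ← RingHom.mapMatrix_apply, ← RingHom.mapMatrix_apply, map_pow]
  obtain ⟨θ', hθ'0, h1, h2⟩ := ENNReal.lt_iff_exists_real_btwn.mp h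
  set θ := max θ' (s / 2) with hθ
  have hθpos : 0 < θ := lt_of_lt_of_le (half_pos hs) (le_max_right _ _)
  have hθs : θ < s := max_lt ((ENNReal.ofReal_lt_ofReal_iff hs).mp h2) (half_lt_self hs)
  have hρθ : specRad Q < ENNReal.ofReal θ :=
    h1.trans_le (ENNReal.ofReal_le_ofReal (le_max_left _ _))
  have hG := spectrum.pow_nnnorm_pow_one_div_tendsto_nhds_spectralRadius Qc
  have hev : ∀ᶠ k : ℕ in Filter.atTop,
      (‖Qc ^ k‖₊ : ℝ≥0∞) ^ (1 / (k : ℝ)) < ENNReal.ofReal θ :=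
    hG.eventually_lt_const hρθ
  obtain ⟨K, hK⟩ := Filter.eventually_atTop.mp hev
  set K' := max K 1 with hK'
  have hbig : ∀ k, K' ≤ k → ‖Qc ^ k‖ ≤ θ ^ k := by
    intro k hk
    have hk1 : 1 ≤ k := le_trans (le_max_right _ _) hk
    have hkK : K ≤ k := le_trans (le_max_left _ _) hk
    have := hK k hkK
    have hkne : (k : ℝ) ≠ 0 := by positivity
    have h3 : ((‖Qc ^ k‖₊ : ℝ≥0∞) ^ (1 / (k : ℝ))) ^ (k : ℝ) ≤ (ENNReal.ofReal θ) ^ (k : ℝ) :=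
      ENNReal.rpow_le_rpow this.le (by positivity)
    rw [← ENNReal.rpow_mul, one_div, inv_mul_cancel₀ hkne, ENNReal.rpow_one] at h3
    rw [ENNReal.ofReal_rpow_of_pos hθpos] at h3
    rw [show ((‖Qc ^ k‖₊ : ℝ≥0∞)) = ENNReal.ofReal ‖Qc ^ k‖ from (ofReal_norm _).symm] at h3
    have := (ENNReal.ofReal_le_ofReal_iff (by positivity)).mp h3
    rwa [Real.rpow_natCast] at this
  refine ⟨1 + ∑ k ∈ Finset.range K', ‖Qc ^ k‖ / θ ^ k, θ, ?_, hθpos, hθs, ?_⟩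
  · have : 0 ≤ ∑ k ∈ Finset.range K', ‖Qc ^ k‖ / θ ^ k :=
      Finset.sum_nonneg fun k _ => div_nonneg (norm_nonneg _) (by positivity)
    linarith
  · intro k i j
    have hentry : |(Q ^ k) i j| ≤ ‖Qc ^ k‖ := by
      have : ((Q ^ k) i j : ℂ) = (Qc ^ k) i j := by
        rw [← hpow k]; simp [Matrix.map_apply]
      calc |(Q ^ k) i j| = ‖((Q ^ k) i j : ℂ)‖ := by rw [Complex.norm_real]; exact (Real.norm_eq_abs _).symm
        _ = ‖(Qc ^ k) i j‖ := by rw [this]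
        _ ≤ ‖Qc ^ k‖ := norm_entry_le i j
    set c := 1 + ∑ k ∈ Finset.range K', ‖Qc ^ k‖ / θ ^ k with hc
    have hc1 : 1 ≤ c := by
      have : 0 ≤ ∑ k ∈ Finset.range K', ‖Qc ^ k‖ / θ ^ k :=
        Finset.sum_nonneg fun k _ => div_nonneg (norm_nonneg _) (by positivity)
      rw [hc]; linarith
    rcases lt_or_ge k K' with hk | hk
    · have hterm : ‖Qc ^ k‖ / θ ^ k ≤ c := by
        have h4 : ‖Qc ^ k‖ / θ ^ k ≤ ∑ l ∈ Finset.range K', ‖Qc ^ l‖ / θ ^ l :=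
          Finset.single_le_sum (f := fun l => ‖Qc ^ l‖ / θ ^ l)
            (fun l _ => div_nonneg (norm_nonneg _) (by positivity)) (Finset.mem_range.mpr hk)
        rw [hc]; linarith
      calc |(Q ^ k) i j| ≤ ‖Qc ^ k‖ := hentry
        _ = (‖Qc ^ k‖ / θ ^ k) * θ ^ k := by field_simp
        _ ≤ c * θ ^ k := by
            apply mul_le_mul_of_nonneg_right hterm (by positivity)
    · calc |(Q ^ k) i j| ≤ ‖Qc ^ k‖ := hentry
        _ ≤ θ ^ k := hbig k hk
        _ ≤ c * θ ^ k := le_mul_of_one_le_left (by positivity) hc1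

end Spec


section Main
variable {n : Type*} [Fintype n] [DecidableEq n]

lemma spos_of_specRad_lt {Q : Matrix n n ℝ} {s : ℝ} (h : specRad Q < ENNReal.ofReal s) :
    0 < s := by
  by_contra hs
  rw [ENNReal.ofReal_eq_zero.mpr (le_of_not_gt hs)] at h
  exact (not_lt_of_ge zero_le) h

lemma neumann_hasSum (s : ℝ) (P Q : Matrix n n ℝ)
    (hP0 : ∀ i j, 0 ≤ P i j) (hPQ : ∀ i j, P i j ≤ Q i j)
    (hspec : specRad Q < ENNReal.ofReal s)
    (r w : n → ℝ) (hr : ∀ i, 0 ≤ r i)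
    (heq : (s • (1 : Matrix n n ℝ) - P).mulVec w = r) :
    ∀ i, HasSum (fun k => s⁻¹ ^ (k + 1) * ((P ^ k).mulVec r) i) (w i) := by
  have hs : 0 < s := spos_of_specRad_lt hspec
  have hw : s • w = P.mulVec w + r := by
    rw [Matrix.sub_mulVec, Matrix.smul_mulVec, Matrix.one_mulVec] at heq
    have := congrArg (· + P.mulVec w) heq
    simpa [sub_add_cancel, add_comm] using this
  have hwrec : w = s⁻¹ • (P.mulVec w + r) := by
    rw [← hw, smul_smul, inv_mul_cancel₀ (ne_of_gt hs), one_smul]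
  have hiter : ∀ nn : ℕ, w =
      (∑ k ∈ Finset.range nn, s⁻¹ ^ (k + 1) • (P ^ k).mulVec r) +
        s⁻¹ ^ nn • (P ^ nn).mulVec w := by
    intro nn
    induction nn with
    | zero => simp [Matrix.one_mulVec]
    | succ nn ih =>
      rw [Finset.sum_range_succ]
      have hstep : (P ^ nn).mulVec w =
          s⁻¹ • ((P ^ (nn + 1)).mulVec w + (P ^ nn).mulVec r) := by
        conv_lhs => rw [hwrec]
        rw [Matrix.mulVec_smul]
        congr 1
        rw [Matrix.mulVec_add]
        congr 1
        rw [Matrix.mulVec_mulVec, ← pow_succ]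
      calc w = (∑ k ∈ Finset.range nn, s⁻¹ ^ (k + 1) • (P ^ k).mulVec r) +
          s⁻¹ ^ nn • (P ^ nn).mulVec w := ih
        _ = _ := by
          rw [hstep]
          simp only [smul_add, smul_smul, ← pow_succ]
          abel
  obtain ⟨c, θ, hc1, hθ0, hθs, hbound⟩ := exists_entry_bound Q hspec
  intro i
  have hnonneg : ∀ k, 0 ≤ s⁻¹ ^ (k + 1) * ((P ^ k).mulVec r) i := by
    intro k
    apply mul_nonneg (by positivity)
    apply Finset.sum_nonneg
    intro j _
    exact mul_nonneg (entpow_nonneg hP0 k i j) (hr j)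
  rw [hasSum_iff_tendsto_nat_of_nonneg hnonneg]
  have hpart : ∀ nn : ℕ, ∑ k ∈ Finset.range nn, s⁻¹ ^ (k + 1) * ((P ^ k).mulVec r) i =
      w i - s⁻¹ ^ nn * ((P ^ nn).mulVec w) i := by
    intro nn
    have := congrFun (hiter nn) i
    simp only [Pi.add_apply, Finset.sum_apply, Pi.smul_apply, smul_eq_mul] at this
    linarith
  have htail : Filter.Tendsto (fun nn => s⁻¹ ^ nn * ((P ^ nn).mulVec w) i)
      Filter.atTop (nhds 0) := by
    have hD : ∀ nn, |s⁻¹ ^ nn * ((P ^ nn).mulVec w) i| ≤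
        (c * ∑ j, |w j|) * (θ / s) ^ nn := by
      intro nn
      rw [abs_mul, abs_pow, abs_inv, abs_of_pos hs]
      have h1 : |((P ^ nn).mulVec w) i| ≤ ∑ j, (c * θ ^ nn) * |w j| := by
        calc |((P ^ nn).mulVec w) i| ≤ ∑ j, |(P ^ nn) i j * w j| :=
              Finset.abs_sum_le_sum_abs _ _
          _ ≤ ∑ j, (c * θ ^ nn) * |w j| := by
              apply Finset.sum_le_sum
              intro j _
              rw [abs_mul]
              apply mul_le_mul_of_nonneg_right _ (abs_nonneg _)
              calc |(P ^ nn) i j| = (P ^ nn) i j := abs_of_nonneg (entpow_nonneg hP0 nn i j)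
                _ ≤ (Q ^ nn) i j := entpow_le hP0 hPQ nn i j
                _ ≤ |(Q ^ nn) i j| := le_abs_self _
                _ ≤ c * θ ^ nn := hbound nn i j
      calc (s⁻¹) ^ nn * |((P ^ nn).mulVec w) i| ≤ (s⁻¹) ^ nn * ((c * θ ^ nn) * ∑ j, |w j|) := by
            apply mul_le_mul_of_nonneg_left _ (by positivity)
            rw [← Finset.mul_sum] at h1; exact h1
        _ = (c * ∑ j, |w j|) * (θ / s) ^ nn := by
            rw [div_pow]
            rw [div_eq_mul_inv, inv_pow]
            ring
    apply squeeze_zero_norm hD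
    have : Filter.Tendsto (fun nn : ℕ => (θ / s) ^ nn) Filter.atTop (nhds 0) := by
      apply tendsto_pow_atTop_nhds_zero_of_lt_one (by positivity)
      rw [div_lt_one hs]; exact hθs
    have := this.const_mul (c * ∑ j, |w j|)
    simpa using this
  have : Filter.Tendsto (fun nn => w i - s⁻¹ ^ nn * ((P ^ nn).mulVec w) i)
      Filter.atTop (nhds (w i)) := by
    have := (tendsto_const_nhds (x := w i) (f := Filter.atTop)).sub htail
    simpa using this
  exact this.congr (fun nn => (hpart nn).symm)

end Main


lemma vec_sum {ι : Type*} (s : Finset ι) (f : ι → Matrix (Fin m) (Fin m) ℝ) :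
    _root_.vec (∑ x ∈ s, f x) = ∑ x ∈ s, _root_.vec (f x) := by
  ext p; simp [_root_.vec, Matrix.sum_apply]

lemma vec_sub (Wa Wb : Matrix (Fin m) (Fin m) ℝ) : _root_.vec (Wa - Wb) = _root_.vec Wa - _root_.vec Wb := by
  ext p; simp [_root_.vec, Matrix.sub_apply]

/-- conversion of a Sylvester-type matrix equation to vectorized form -/
lemma eq_conv (NN : ℕ) (A : ℕ → Matrix (Fin m) (Fin m) ℝ)
    (B W R : Matrix (Fin m) (Fin m) ℝ)
    (h : ∑ v ∈ Finset.Icc 1 NN, ∑ j ∈ Finset.range v,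
        A v * B ^ j * W * B ^ (v - 1 - j) - W = -R) :
    ((1 : Matrix (Fin m × Fin m) (Fin m × Fin m) ℝ) -
      ∑ v ∈ Finset.Icc 1 NN, ∑ j ∈ Finset.range v,
        (B ^ (v - 1 - j))ᵀ ⊗ₖ (A v * B ^ j)).mulVec (_root_.vec W) = _root_.vec R := by
  set S := ∑ v ∈ Finset.Icc 1 NN, ∑ j ∈ Finset.range v, A v * B ^ j * W * B ^ (v - 1 - j)
  have hWS : W - S = R := by
    have : -(S - W) = -(-R) := congrArg Neg.neg h
    rw [neg_neg, neg_sub] at this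
    exact this
  rw [Matrix.sub_mulVec, Matrix.one_mulVec]
  have hK : (∑ v ∈ Finset.Icc 1 NN, ∑ j ∈ Finset.range v,
      (B ^ (v - 1 - j))ᵀ ⊗ₖ (A v * B ^ j)).mulVec (_root_.vec W) = _root_.vec S := by
    rw [sum_mulVec']
    rw [show (_root_.vec S : Fin m × Fin m → ℝ) = ∑ v ∈ Finset.Icc 1 NN,
        _root_.vec (∑ j ∈ Finset.range v, A v * B ^ j * W * B ^ (v - 1 - j)) from _root_.vec_sum _ _]
    apply Finset.sum_congr rfl
    intro v _
    rw [sum_mulVec', _root_.vec_sum]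
    apply Finset.sum_congr rfl
    intro j _
    exact kron_mulVec (A v * B ^ j) (B ^ (v - 1 - j)) W
  rw [hK, ← _root_.vec_sub, hWS]


theorem stmt8 (m N : ℕ) (hm : 1 ≤ m) (hN : 1 ≤ N)
    (A : ℕ → Matrix (Fin m) (Fin m) ℝ)
    (hA : ∀ v, v ≤ N → ∀ i j, 0 ≤ A v i j)
    (G : Matrix (Fin m) (Fin m) ℝ)
    (hG0 : ∀ i j, 0 ≤ G i j)
    (hGsol : ∑ v ∈ Finset.range (N + 1), A v * G ^ v = G)
    (hGmin : ∀ S : Matrix (Fin m) (Fin m) ℝ, (∀ i j, 0 ≤ S i j) →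
      ∑ v ∈ Finset.range (N + 1), A v * S ^ v = S → ∀ i j, G i j ≤ S i j)
    (X : Matrix (Fin m) (Fin m) ℝ)
    (hGX : ∀ i j, 0 ≤ (∑ v ∈ Finset.range (N + 1), A v * X ^ v - X) i j)
    (hX0 : ∀ i j, 0 ≤ X i j) (hXG : ∀ i j, X i j ≤ G i j)
    (hMX : IsNonsingMMatrix
      ((1 : Matrix (Fin m × Fin m) (Fin m × Fin m) ℝ) -
      ∑ v ∈ Finset.Icc 1 N, ∑ j ∈ Finset.range v,
        (X ^ (v - 1 - j))ᵀ ⊗ₖ (A v * X ^ j)))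
    (Z : Matrix (Fin m) (Fin m) ℝ)
    (hZ0 : ∀ i j, 0 ≤ Z i j) (hZX : ∀ i j, Z i j ≤ X i j)
    (Y : Matrix (Fin m) (Fin m) ℝ)
    (hY : ∑ v ∈ Finset.Icc 1 N, ∑ j ∈ Finset.range v,
        A v * Z ^ j * (Y - X) * Z ^ (v - 1 - j) - (Y - X) =
      -(∑ v ∈ Finset.range (N + 1), A v * X ^ v - X))
    (Yhat : Matrix (Fin m) (Fin m) ℝ)
    (hYhat : ∑ v ∈ Finset.Icc 1 N, ∑ j ∈ Finset.range v,
        A v * X ^ j * (Yhat - X) * X ^ (v - 1 - j) - (Yhat - X) =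
      -(∑ v ∈ Finset.range (N + 1), A v * X ^ v - X)) :
    ∀ i j, Y i j ≤ Yhat i j := by
  classical
  set R : Matrix (Fin m) (Fin m) ℝ := ∑ v ∈ Finset.range (N + 1), A v * X ^ v - X with hR
  set r : Fin m × Fin m → ℝ := _root_.vec R with hrdef
  have hr : ∀ p, 0 ≤ r p := fun p => hGX p.2 p.1
  set KZ : Matrix (Fin m × Fin m) (Fin m × Fin m) ℝ :=
    ∑ v ∈ Finset.Icc 1 N, ∑ j ∈ Finset.range v,
      (Z ^ (v - 1 - j))ᵀ ⊗ₖ (A v * Z ^ j) with hKZdef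
  set KX : Matrix (Fin m × Fin m) (Fin m × Fin m) ℝ :=
    ∑ v ∈ Finset.Icc 1 N, ∑ j ∈ Finset.range v,
      (X ^ (v - 1 - j))ᵀ ⊗ₖ (A v * X ^ j) with hKXdef
  -- entrywise facts about KZ, KX
  have hKZ0 : ∀ p q, 0 ≤ KZ p q := by
    intro p q
    rw [hKZdef, Matrix.sum_apply]
    apply Finset.sum_nonneg; intro v hv
    rw [Matrix.sum_apply]
    apply Finset.sum_nonneg; intro j _
    obtain ⟨p₁, p₂⟩ := p; obtain ⟨q₁, q₂⟩ := q
    simp only [Matrix.kroneckerMap_apply, Matrix.transpose_apply]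
    exact mul_nonneg (entpow_nonneg hZ0 _ _ _)
      (entmul_nonneg (hA v (Finset.mem_Icc.mp hv).2) (entpow_nonneg hZ0 _) _ _)
  have hKZX : ∀ p q, KZ p q ≤ KX p q := by
    intro p q
    rw [hKZdef, hKXdef, Matrix.sum_apply, Matrix.sum_apply]
    apply Finset.sum_le_sum; intro v hv
    rw [Matrix.sum_apply, Matrix.sum_apply]
    apply Finset.sum_le_sum; intro j _
    obtain ⟨p₁, p₂⟩ := p; obtain ⟨q₁, q₂⟩ := q
    simp only [Matrix.kroneckerMap_apply, Matrix.transpose_apply]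
    have hAv := hA v (Finset.mem_Icc.mp hv).2
    apply mul_le_mul (entpow_le hZ0 hZX _ _ _)
      (entmul_le hAv (entpow_nonneg hZ0 _) (fun _ _ => le_refl _) (entpow_le hZ0 hZX _) _ _)
      (entmul_nonneg hAv (entpow_nonneg hZ0 _) _ _)
      (entpow_nonneg hX0 _ _ _)
  -- unpack the M-matrix hypothesis
  obtain ⟨-, s, B, hB0, hMeq, hρ⟩ := hMX
  have hs0 : 0 < s := spos_of_specRad_lt hρ
  set s' : ℝ := max s 1 with hs'def
  have hs'1 : 1 ≤ s' := le_max_right _ _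
  have hss' : s ≤ s' := le_max_left _ _
  set t : ℝ := s' - s with htdef
  have ht : 0 ≤ t := by rw [htdef]; linarith
  set B' : Matrix (Fin m × Fin m) (Fin m × Fin m) ℝ := B + t • 1 with hB'def
  have hρ' : specRad B' < ENNReal.ofReal s' := by
    calc specRad B' ≤ specRad B + ENNReal.ofReal t := specRad_add_smul_one_le B ht
      _ < ENNReal.ofReal s + ENNReal.ofReal t :=
          ENNReal.add_lt_add_right ENNReal.ofReal_ne_top hρ
      _ = ENNReal.ofReal s' := by
          rw [← ENNReal.ofReal_add (le_of_lt hs0) ht, htdef]; ring_nf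
  set BZ : Matrix (Fin m × Fin m) (Fin m × Fin m) ℝ := (s' - 1) • 1 + KZ with hBZdef
  set BX : Matrix (Fin m × Fin m) (Fin m × Fin m) ℝ := (s' - 1) • 1 + KX with hBXdef
  have hEqZ : (1 : Matrix (Fin m × Fin m) (Fin m × Fin m) ℝ) - KZ = s' • 1 - BZ := by
    rw [hBZdef]; module
  have hEqX : (1 : Matrix (Fin m × Fin m) (Fin m × Fin m) ℝ) - KX = s' • 1 - BX := by
    rw [hBXdef]; module
  have hBXB' : BX = B' := by
    have h1 : s' • (1 : Matrix (Fin m × Fin m) (Fin m × Fin m) ℝ) - BX = s' • 1 - B' := by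
      rw [← hEqX, hMeq, hB'def, htdef]; module
    have := sub_right_injective h1
    exact this
  have hBZ0 : ∀ p q, 0 ≤ BZ p q := by
    intro p q
    rw [hBZdef]
    simp only [Matrix.add_apply, Matrix.smul_apply, Matrix.one_apply, smul_eq_mul]
    by_cases h : p = q
    · subst h; simp only [if_true, eq_self_iff_true, mul_one]
      have := hKZ0 p p; nlinarith [hKZ0 p p]
    · simp only [if_neg h, mul_zero, zero_add]
      exact hKZ0 p q
  have hBZX : ∀ p q, BZ p q ≤ BX p q := by
    intro p q
    rw [hBZdef, hBXdef]
    simp only [Matrix.add_apply]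
    exact add_le_add_right (hKZX p q) _
  have hρX : specRad BX < ENNReal.ofReal s' := by rw [hBXB']; exact hρ'
  -- vectorized equations
  have heqZ : (s' • (1 : Matrix (Fin m × Fin m) (Fin m × Fin m) ℝ) - BZ).mulVec
      (_root_.vec (Y - X)) = r := by
    rw [← hEqZ, hrdef]
    exact eq_conv N A Z (Y - X) R hY
  have heqX : (s' • (1 : Matrix (Fin m × Fin m) (Fin m × Fin m) ℝ) - BX).mulVec
      (_root_.vec (Yhat - X)) = r := by
    rw [← hEqX, hrdef]
    exact eq_conv N A X (Yhat - X) R hYhat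
  have hSZ := neumann_hasSum s' BZ BX hBZ0 hBZX hρX r (_root_.vec (Y - X)) hr heqZ
  have hSX := neumann_hasSum s' BX BX (fun p q => le_trans (hBZ0 p q) (hBZX p q))
    (fun p q => le_refl _) hρX r (_root_.vec (Yhat - X)) hr heqX
  have hle : ∀ p, _root_.vec (Y - X) p ≤ _root_.vec (Yhat - X) p := by
    intro p
    refine hasSum_le ?_ (hSZ p) (hSX p)
    intro k
    apply mul_le_mul_of_nonneg_left _ (by positivity)
    apply Finset.sum_le_sum
    intro q _
    exact mul_le_mul_of_nonneg_right
      (entpow_le hBZ0 hBZX k p q) (hr q)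
  intro i j
  have := hle (j, i)
  simp only [_root_.vec, Matrix.sub_apply] at this
  linarith
end

section
/- Suppose I − Σ_{v=1}^{N} Σ_{j=0}^{v-1} (G^{v-1-j})ᵀ ⊗ (A_v G^{j}) is a nonsingular M-matrix, and suppose the initial matrix G_{0,0} satisfies (i) 𝒢(G_{0,0}) ≥ 0, (ii) 0 ≤ G_{0,0} ≤ G, and (iii) I − Σ_{v=1}^{N} Σ_{j=0}^{v-1} (G_{0,0}^{v-1-j})ᵀ ⊗ (A_v G_{0,0}^{j}) is a nonsingular M-matrix. Then for every Newton–Shamanskii sequence (G_{k,s}) with these data, one has G_{k,s-1} ≤ G_{k,s} ≤ G entrywise for all k ≥ 0 and 1 ≤ s ≤ n_k. -/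
open Matrix Finset Kronecker Filter Topology
open scoped ENNReal Pointwise

set_option linter.unusedSectionVars false
set_option linter.unusedVariables false
set_option maxHeartbeats 1000000

namespace NSaux

variable {p : Type*} [Fintype p] [DecidableEq p]

theorem emul_nonneg {P Q : Matrix p p ℝ} (hP : ∀ i j, 0 ≤ P i j) (hQ : ∀ i j, 0 ≤ Q i j) :
    ∀ i j, 0 ≤ (P * Q) i j := fun i j =>
  Finset.sum_nonneg fun k _ => mul_nonneg (hP i k) (hQ k j)

theorem emul_le {P P' Q Q' : Matrix p p ℝ} (hP0 : ∀ i j, 0 ≤ P i j) (hQ0 : ∀ i j, 0 ≤ Q i j)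
    (hP : ∀ i j, P i j ≤ P' i j) (hQ : ∀ i j, Q i j ≤ Q' i j) :
    ∀ i j, (P * Q) i j ≤ (P' * Q') i j := fun i j =>
  Finset.sum_le_sum fun k _ =>
    mul_le_mul (hP i k) (hQ k j) (hQ0 k j) ((hP0 i k).trans (hP i k))

theorem eone_nonneg : ∀ i j, (0:ℝ) ≤ (1 : Matrix p p ℝ) i j := by
  intro i j; rw [Matrix.one_apply]; split <;> norm_num

theorem epow_nonneg {Y : Matrix p p ℝ} (hY : ∀ i j, 0 ≤ Y i j) (k : ℕ) :
    ∀ i j, 0 ≤ (Y ^ k) i j := by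
  induction k with
  | zero => simpa using eone_nonneg
  | succ k ih => rw [pow_succ]; exact emul_nonneg ih hY

theorem epow_le {Y Z : Matrix p p ℝ} (hY : ∀ i j, 0 ≤ Y i j) (hYZ : ∀ i j, Y i j ≤ Z i j)
    (k : ℕ) : ∀ i j, (Y ^ k) i j ≤ (Z ^ k) i j := by
  induction k with
  | zero => simp
  | succ k ih => rw [pow_succ, pow_succ]; exact emul_le (epow_nonneg hY k) hY ih hYZ

theorem pow_sub_pow (U V : Matrix p p ℝ) (v : ℕ) :
    U ^ v - V ^ v = ∑ j ∈ Finset.range v, U ^ j * (U - V) * V ^ (v - 1 - j) := by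
  induction v with
  | zero => simp
  | succ v ih =>
    rw [Finset.sum_range_succ]
    have hlast : U ^ v * (U - V) * V ^ (v + 1 - 1 - v) = U ^ v * (U - V) := by
      simp
    rw [hlast]
    have hstep : ∀ j ∈ Finset.range v,
        U ^ j * (U - V) * V ^ (v + 1 - 1 - j) = (U ^ j * (U - V) * V ^ (v - 1 - j)) * V := by
      intro j hj
      rw [Finset.mem_range] at hj
      have : v + 1 - 1 - j = (v - 1 - j) + 1 := by omega
      rw [this, pow_succ]
      ring_nf
      rw [mul_assoc, mul_assoc, mul_assoc]
    rw [Finset.sum_congr rfl hstep, ← Finset.sum_mul, ← ih]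
    rw [pow_succ, pow_succ]
    noncomm_ring
theorem range_succ_eq_insert (N : ℕ) : Finset.range (N + 1) = insert 0 (Finset.Icc 1 N) := by
  ext x; simp [Finset.mem_range, Finset.mem_Icc]; omega

theorem sum_Icc_eq (N : ℕ) (A : ℕ → Matrix p p ℝ) (U W : Matrix p p ℝ) :
    ∑ v ∈ Finset.range (N + 1), A v * U ^ v - ∑ v ∈ Finset.range (N + 1), A v * W ^ v
      = ∑ v ∈ Finset.Icc 1 N, A v * (U ^ v - W ^ v) := by
  rw [← Finset.sum_sub_distrib, range_succ_eq_insert,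
    Finset.sum_insert (by simp)]
  simp only [pow_zero, sub_self, mul_sub]
  abel

theorem L_sub (N : ℕ) (A : ℕ → Matrix p p ℝ) (Y P Q : Matrix p p ℝ) :
    ∑ v ∈ Finset.Icc 1 N, ∑ j ∈ Finset.range v, A v * Y ^ j * (P - Q) * Y ^ (v - 1 - j)
      = (∑ v ∈ Finset.Icc 1 N, ∑ j ∈ Finset.range v, A v * Y ^ j * P * Y ^ (v - 1 - j))
        - ∑ v ∈ Finset.Icc 1 N, ∑ j ∈ Finset.range v, A v * Y ^ j * Q * Y ^ (v - 1 - j) := by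
  rw [← Finset.sum_sub_distrib]
  refine Finset.sum_congr rfl fun v _ => ?_
  rw [← Finset.sum_sub_distrib]
  refine Finset.sum_congr rfl fun j _ => ?_
  noncomm_ring

theorem core {N : ℕ} (A : ℕ → Matrix p p ℝ) (hA : ∀ v, v ≤ N → ∀ i j, 0 ≤ A v i j)
    (Y V U : Matrix p p ℝ) (hY0 : ∀ i j, 0 ≤ Y i j) (hYV : ∀ i j, Y i j ≤ V i j)
    (hVU : ∀ i j, V i j ≤ U i j) :
    ∀ i j, (∑ v ∈ Finset.Icc 1 N, ∑ t ∈ Finset.range v,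
        A v * Y ^ t * (U - V) * Y ^ (v - 1 - t)) i j
      ≤ (∑ v ∈ Finset.Icc 1 N, A v * (U ^ v - V ^ v)) i j := by
  intro i j
  have hV0 : ∀ i j, 0 ≤ V i j := fun i j => (hY0 i j).trans (hYV i j)
  have hYU : ∀ i j, Y i j ≤ U i j := fun i j => (hYV i j).trans (hVU i j)
  have hUV0 : ∀ i j, 0 ≤ (U - V) i j := by
    intro i j; rw [Matrix.sub_apply]; linarith [hVU i j]
  simp only [Matrix.sum_apply]
  refine Finset.sum_le_sum fun v hv => ?_
  have hvN := (Finset.mem_Icc.mp hv).2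
  rw [pow_sub_pow U V v, Finset.mul_sum, Matrix.sum_apply]
  refine Finset.sum_le_sum fun t _ => ?_
  have hassoc : A v * (U ^ t * (U - V) * V ^ (v - 1 - t))
      = A v * U ^ t * (U - V) * V ^ (v - 1 - t) := by noncomm_ring
  rw [hassoc]
  exact emul_le
    (emul_nonneg (emul_nonneg (hA v hvN) (epow_nonneg hY0 t)) hUV0)
    (epow_nonneg hY0 _)
    (emul_le (emul_nonneg (hA v hvN) (epow_nonneg hY0 t)) hUV0
      (emul_le (hA v hvN) (epow_nonneg hY0 t) (fun _ _ => le_refl _) (epow_le hY0 hYU t))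
      (fun _ _ => le_refl _))
    (epow_le hY0 hYV _) i j

section Analysis

attribute [local instance] Matrix.linftyOpNormedRing Matrix.linftyOpNormedAlgebra

theorem map_pow' (B : Matrix p p ℝ) (k : ℕ) :
    (B.map (algebraMap ℝ ℂ)) ^ k = (B ^ k).map (algebraMap ℝ ℂ) :=
  (map_pow (RingHom.mapMatrix (algebraMap ℝ ℂ) : Matrix p p ℝ →+* Matrix p p ℂ) B k).symm

theorem nnnorm_mapC (M : Matrix p p ℝ) :
    ‖M.map (algebraMap ℝ ℂ)‖₊ = Finset.univ.sup fun i => ∑ j, ‖M i j‖₊ := by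
  rw [Matrix.linfty_opNNNorm_def]
  congr 1; funext i; congr 1; funext j
  simp [Matrix.map_apply]

theorem gelfand (M : Matrix p p ℝ) :
    Tendsto (fun k : ℕ => (‖(M.map (algebraMap ℝ ℂ)) ^ k‖₊ : ℝ≥0∞) ^ (1 / (k:ℝ))) atTop
      (𝓝 (specRad M)) :=
  spectrum.pow_nnnorm_pow_one_div_tendsto_nhds_spectralRadius _

theorem specRad_mono {C D : Matrix p p ℝ} (hC : ∀ i j, 0 ≤ C i j)
    (hCD : ∀ i j, C i j ≤ D i j) : specRad C ≤ specRad D := by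
  refine le_of_tendsto_of_tendsto' (gelfand C) (gelfand D) fun k => ?_
  refine ENNReal.rpow_le_rpow ?_ (by positivity)
  rw [map_pow', map_pow', nnnorm_mapC, nnnorm_mapC]
  norm_cast
  refine Finset.sup_mono_fun fun i _ => Finset.sum_le_sum fun j _ => ?_
  have h1 := epow_nonneg hC k i j
  have h2 := epow_le hC hCD k i j
  simp only [← NNReal.coe_le_coe, coe_nnnorm, Real.norm_eq_abs]
  rw [abs_of_nonneg h1, abs_of_nonneg (h1.trans h2)]
  exact h2

theorem entry_le_norm {M : Matrix p p ℝ} (h : ∀ i j, 0 ≤ M i j) (i j : p) :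
    M i j ≤ ‖M.map (algebraMap ℝ ℂ)‖ := by
  have h1 : ‖M i j‖₊ ≤ ‖M.map (algebraMap ℝ ℂ)‖₊ := by
    rw [nnnorm_mapC]
    exact le_trans (Finset.single_le_sum (f := fun j => ‖M i j‖₊) (fun _ _ => zero_le)
      (Finset.mem_univ j)) (Finset.le_sup (f := fun i => ∑ j, ‖M i j‖₊) (Finset.mem_univ i))
  calc M i j ≤ ‖M i j‖ := le_abs_self _
    _ ≤ _ := h1

theorem specRad_shift (B : Matrix p p ℝ) (c : ℝ) (hc : 0 ≤ c) :
    specRad (c • (1 : Matrix p p ℝ) + B) ≤ ENNReal.ofReal c + specRad B := by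
  have hmap : (c • (1 : Matrix p p ℝ) + B).map (algebraMap ℝ ℂ) =
      algebraMap ℂ (Matrix p p ℂ) (c : ℂ) + B.map (algebraMap ℝ ℂ) := by
    ext i j
    simp [Matrix.map_apply, Matrix.algebraMap_matrix_apply, Matrix.one_apply, Matrix.add_apply]
    split <;> simp
  unfold specRad
  rw [hmap]
  have hspec : spectrum ℂ (algebraMap ℂ (Matrix p p ℂ) (c:ℂ) + B.map (algebraMap ℝ ℂ)) =
      ({(c:ℂ)} : Set ℂ) + spectrum ℂ (B.map (algebraMap ℝ ℂ)) :=
    (spectrum.singleton_add_eq _ (c:ℂ)).symm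
  rw [spectralRadius, hspec]
  refine iSup₂_le fun z hz => ?_
  obtain ⟨a, ha, b, hb, rfl⟩ := Set.mem_add.mp hz
  rw [Set.mem_singleton_iff] at ha; subst ha
  calc (‖(c:ℂ) + b‖₊ : ℝ≥0∞) ≤ (‖(c:ℂ)‖₊ : ℝ≥0∞) + (‖b‖₊ : ℝ≥0∞) := by
        rw [← ENNReal.coe_add]; exact ENNReal.coe_le_coe.mpr (nnnorm_add_le _ _)
    _ ≤ ENNReal.ofReal c + spectralRadius ℂ (B.map (algebraMap ℝ ℂ)) := by
        gcongr
        · rw [Complex.nnnorm_real, ← enorm_eq_nnnorm, Real.enorm_eq_ofReal hc]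
        · exact le_iSup₂ (f := fun k (_ : k ∈ spectrum ℂ (B.map (algebraMap ℝ ℂ))) =>
            (‖k‖₊ : ℝ≥0∞)) b hb

theorem neumann {C : Matrix p p ℝ} {t : ℝ} (hC : ∀ i j, 0 ≤ C i j)
    (ht : specRad C < ENNReal.ofReal t) (x : p → ℝ)
    (hx : ∀ i, 0 ≤ ((t • (1 : Matrix p p ℝ) - C).mulVec x) i) : ∀ i, 0 ≤ x i := by
  set y := (t • (1 : Matrix p p ℝ) - C).mulVec x with hy
  have ht0 : 0 < t := by
    by_contra h
    push_neg at h
    rw [ENNReal.ofReal_of_nonpos h] at ht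
    exact (ENNReal.not_lt_zero) ht
  have hρtop : specRad C ≠ ⊤ := ht.ne_top
  set r : ℝ := ((specRad C).toReal + t) / 2 with hr
  have hρt : (specRad C).toReal < t := by
    rw [← ENNReal.ofReal_toReal hρtop, ENNReal.ofReal_lt_ofReal_iff ht0] at ht
    exact ht
  have hρr : specRad C < ENNReal.ofReal r := by
    rw [← ENNReal.ofReal_toReal hρtop]
    rw [ENNReal.ofReal_lt_ofReal_iff (by positivity)]
    · rw [hr]; linarith
  have hrt : r < t := by rw [hr]; linarith [ENNReal.toReal_nonneg (a := specRad C)]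
  have hr0 : 0 < r := by
    rw [hr]; have := ENNReal.toReal_nonneg (a := specRad C); linarith
  -- eventual norm bound
  have hev : ∀ᶠ k : ℕ in atTop, (‖(C.map (algebraMap ℝ ℂ)) ^ k‖₊ : ℝ≥0∞) ^ (1 / (k:ℝ)) <
      ENNReal.ofReal r := (gelfand C).eventually_lt_const hρr
  obtain ⟨N₀, hN₀⟩ := eventually_atTop.mp hev
  set N₁ := max N₀ 1 with hN₁
  have hent : ∀ k, N₁ ≤ k → ∀ i j, (C ^ k) i j ≤ r ^ k := by
    intro k hk i j
    have hk1 : 1 ≤ k := le_trans (le_max_right _ _) hk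
    have h1 := hN₀ k (le_trans (le_max_left _ _) hk)
    have h2 : (‖(C.map (algebraMap ℝ ℂ)) ^ k‖₊ : ℝ≥0∞) < ENNReal.ofReal (r ^ k) := by
      calc (‖(C.map (algebraMap ℝ ℂ)) ^ k‖₊ : ℝ≥0∞)
          = ((‖(C.map (algebraMap ℝ ℂ)) ^ k‖₊ : ℝ≥0∞) ^ (1 / (k:ℝ))) ^ (k:ℝ) := by
            rw [← ENNReal.rpow_mul, one_div,
              inv_mul_cancel₀ (by positivity : (k:ℝ) ≠ 0), ENNReal.rpow_one]
        _ < (ENNReal.ofReal r) ^ (k:ℝ) := ENNReal.rpow_lt_rpow h1 (by positivity)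
        _ = ENNReal.ofReal (r ^ k) := by
            rw [ENNReal.rpow_natCast, ← ENNReal.ofReal_pow hr0.le]
    have h4 : ‖(C.map (algebraMap ℝ ℂ)) ^ k‖ ≤ r ^ k := by
      have h2' := h2.le
      rw [← enorm_eq_nnnorm, ← ofReal_norm] at h2'
      exact (ENNReal.ofReal_le_ofReal_iff (by positivity)).mp h2'
    calc (C ^ k) i j ≤ ‖(C ^ k).map (algebraMap ℝ ℂ)‖ :=
          entry_le_norm (epow_nonneg hC k) i j
      _ = ‖(C.map (algebraMap ℝ ℂ)) ^ k‖ := by rw [map_pow']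
      _ ≤ r ^ k := h4
  -- summability
  have hsum : ∀ i j, Summable (fun k => (C ^ k) i j * t⁻¹ ^ (k+1)) := by
    intro i j
    rw [← summable_nat_add_iff N₁]
    have hgeo : Summable (fun k : ℕ => (t⁻¹ * (r * t⁻¹) ^ N₁) * (r * t⁻¹) ^ k) := by
      refine Summable.mul_left _ (summable_geometric_of_lt_one (by positivity) ?_)
      rw [mul_comm, ← div_eq_inv_mul]
      exact div_lt_one ht0 |>.mpr hrt
    refine Summable.of_nonneg_of_le (fun k => ?_) (fun k => ?_) hgeo
    · exact mul_nonneg (epow_nonneg hC _ i j) (by positivity)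
    · have h5 := hent (k + N₁) (le_add_self) i j
      calc (C ^ (k + N₁)) i j * t⁻¹ ^ (k + N₁ + 1)
          ≤ r ^ (k + N₁) * t⁻¹ ^ (k + N₁ + 1) := by
            apply mul_le_mul_of_nonneg_right h5 (by positivity)
        _ = (t⁻¹ * (r * t⁻¹) ^ N₁) * (r * t⁻¹) ^ k := by
            rw [mul_pow, mul_pow]; ring
  have hsum' : ∀ i j, Summable (fun k => (C ^ k) i j * t⁻¹ ^ k) := by
    intro i j
    have := (hsum i j).mul_left t
    refine this.congr fun k => ?_
    rw [pow_succ]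
    field_simp
  -- the inverse-like matrix
  set T : Matrix p p ℝ := Matrix.of (fun i j => ∑' k, (C ^ k) i j * t⁻¹ ^ (k+1)) with hT
  have hT0 : ∀ i j, 0 ≤ T i j := fun i j =>
    tsum_nonneg fun k => mul_nonneg (epow_nonneg hC _ _ _) (by positivity)
  have hTM : T * (t • (1 : Matrix p p ℝ) - C) = 1 := by
    ext i l
    rw [Matrix.mul_apply]
    have hexp : ∀ k, T i k * (t • (1 : Matrix p p ℝ) - C) k l =
        (if k = l then T i k * t else 0) - T i k * C k l := by
      intro k
      rw [Matrix.sub_apply, Matrix.smul_apply, Matrix.one_apply, mul_sub, smul_eq_mul, mul_ite]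
      simp
    simp only [hexp]
    rw [Finset.sum_sub_distrib, Finset.sum_ite_eq' Finset.univ l (fun k => T i k * t)]
    simp only [Finset.mem_univ, if_true]
    have h1 : T i l * t = ∑' n, (C ^ n) i l * t⁻¹ ^ n := by
      rw [hT]
      show (∑' k, (C ^ k) i l * t⁻¹ ^ (k+1)) * t = _
      rw [← tsum_mul_right]
      congr 1; funext k
      rw [pow_succ]
      field_simp
    have h2 : ∑ k, T i k * C k l = ∑' n, (C ^ (n+1)) i l * t⁻¹ ^ (n+1) := by
      have e1 : ∀ k, T i k * C k l = ∑' n, (C ^ n) i k * t⁻¹ ^ (n+1) * C k l := by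
        intro k; rw [hT]; exact (tsum_mul_right).symm
      simp only [e1]
      rw [← Summable.tsum_finsetSum (f := fun k n => (C ^ n) i k * t⁻¹ ^ (n+1) * C k l)
        (fun k _ => (hsum i k).mul_right _)]
      congr 1; funext n
      rw [pow_succ C n, Matrix.mul_apply, Finset.sum_mul]
      refine Finset.sum_congr rfl fun k _ => ?_
      ring
    rw [h1, h2]
    have h3 := Summable.tsum_eq_zero_add (hsum' i l)
    rw [h3]
    simp only [pow_zero, mul_one, Matrix.one_apply]
    ring
  intro i
  have hx' : x = T.mulVec y := by
    rw [hy, Matrix.mulVec_mulVec, hTM, Matrix.one_mulVec]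
  rw [hx']
  exact Finset.sum_nonneg fun k _ => mul_nonneg (hT0 i k) (hx k)

theorem mkey {Lm Km : Matrix p p ℝ} (hM : IsNonsingMMatrix (1 - Lm))
    (hK0 : ∀ i j, 0 ≤ Km i j) (hKL : ∀ i j, Km i j ≤ Lm i j)
    (x : p → ℝ) (hx : ∀ i, 0 ≤ ((1 - Km).mulVec x) i) : ∀ i, 0 ≤ x i := by
  obtain ⟨hZ, s, B, hB0, hrep, hs⟩ := hM
  have hs0 : 0 < s := by
    by_contra h
    push_neg at h
    rw [ENNReal.ofReal_of_nonpos h] at hs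
    exact ENNReal.not_lt_zero hs
  set t : ℝ := max s 1 with htd
  have hts : s ≤ t := le_max_left _ _
  have ht1 : (1:ℝ) ≤ t := le_max_right _ _
  set C : Matrix p p ℝ := (t - 1) • (1 : Matrix p p ℝ) + Km with hCd
  set D : Matrix p p ℝ := (t - 1) • (1 : Matrix p p ℝ) + Lm with hDd
  have hC0 : ∀ i j, 0 ≤ C i j := by
    intro i j
    rw [hCd, Matrix.add_apply, Matrix.smul_apply, Matrix.one_apply, smul_eq_mul]
    split
    · have := hK0 i j; linarith
    · have := hK0 i j; linarith
  have hCD : ∀ i j, C i j ≤ D i j := by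
    intro i j
    rw [hCd, hDd, Matrix.add_apply, Matrix.add_apply]
    exact add_le_add_right (hKL i j) _
  have hDB : D = (t - s) • (1 : Matrix p p ℝ) + B := by
    have hB : B = s • (1 : Matrix p p ℝ) - (1 - Lm) := by rw [hrep]; abel
    rw [hDd, hB]
    ext i j
    simp only [Matrix.add_apply, Matrix.smul_apply, Matrix.sub_apply, Matrix.one_apply,
      smul_eq_mul]
    split <;> ring
  have hρD : specRad D < ENNReal.ofReal t := by
    calc specRad D ≤ ENNReal.ofReal (t - s) + specRad B := by
          rw [hDB]; exact specRad_shift B (t - s) (by linarith)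
      _ < ENNReal.ofReal (t - s) + ENNReal.ofReal s :=
          ENNReal.add_lt_add_left ENNReal.ofReal_ne_top hs
      _ = ENNReal.ofReal t := by
          rw [← ENNReal.ofReal_add (by linarith) hs0.le]
          norm_num
  have hρC : specRad C < ENNReal.ofReal t := lt_of_le_of_lt (specRad_mono hC0 hCD) hρD
  have hone : (1 : Matrix p p ℝ) - Km = t • (1 : Matrix p p ℝ) - C := by
    rw [hCd]; ext i j
    simp only [Matrix.sub_apply, Matrix.add_apply, Matrix.smul_apply, Matrix.one_apply,
      smul_eq_mul]
    split <;> ring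
  refine neumann hC0 hρC x ?_
  rw [← hone]
  exact hx

end Analysis

theorem kron_mulVec (P Q X : Matrix p p ℝ) (q : p × p) :
    ((Qᵀ ⊗ₖ P).mulVec (fun r => X r.2 r.1)) q = (P * X * Q) q.2 q.1 := by
  obtain ⟨i1, i2⟩ := q
  simp only [Matrix.mulVec, dotProduct, Matrix.kroneckerMap_apply,
    Matrix.transpose_apply, Matrix.mul_apply, Fintype.sum_prod_type]
  refine Finset.sum_congr rfl fun j1 _ => ?_
  rw [Finset.sum_mul]
  refine Finset.sum_congr rfl fun j2 _ => ?_
  ring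

theorem sum_mulVec_apply {ι : Type*} (s : Finset ι) (M : ι → Matrix (p × p) (p × p) ℝ)
    (w : p × p → ℝ) (q : p × p) :
    ((∑ a ∈ s, M a).mulVec w) q = ∑ a ∈ s, ((M a).mulVec w) q := by
  simp only [Matrix.mulVec, dotProduct, Matrix.sum_apply, Finset.sum_mul]
  exact Finset.sum_comm

theorem solve_aux {m N : ℕ} (A : ℕ → Matrix (Fin m) (Fin m) ℝ)
    (hA : ∀ v, v ≤ N → ∀ i j, 0 ≤ A v i j)
    (G : Matrix (Fin m) (Fin m) ℝ) (hG0 : ∀ i j, 0 ≤ G i j)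
    (hMG : IsNonsingMMatrix
      ((1 : Matrix (Fin m × Fin m) (Fin m × Fin m) ℝ) -
      ∑ v ∈ Finset.Icc 1 N, ∑ j ∈ Finset.range v,
        (G ^ (v - 1 - j))ᵀ ⊗ₖ (A v * G ^ j)))
    (Y X : Matrix (Fin m) (Fin m) ℝ)
    (hY0 : ∀ i j, 0 ≤ Y i j) (hYG : ∀ i j, Y i j ≤ G i j)
    (hpos : ∀ i j, 0 ≤ (X - ∑ v ∈ Finset.Icc 1 N, ∑ j ∈ Finset.range v,
        A v * Y ^ j * X * Y ^ (v - 1 - j)) i j) :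
    ∀ i j, 0 ≤ X i j := by
  have hK0 : ∀ a b, 0 ≤ (∑ v ∈ Finset.Icc 1 N, ∑ j ∈ Finset.range v,
      (Y ^ (v - 1 - j))ᵀ ⊗ₖ (A v * Y ^ j)) a b := by
    intro a b
    simp only [Matrix.sum_apply]
    refine Finset.sum_nonneg fun v hv => Finset.sum_nonneg fun j _ => ?_
    have hvN := (Finset.mem_Icc.mp hv).2
    rw [Matrix.kroneckerMap_apply, Matrix.transpose_apply]
    exact mul_nonneg (epow_nonneg hY0 _ _ _) (emul_nonneg (hA v hvN) (epow_nonneg hY0 j) _ _)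
  have hKle : ∀ a b, (∑ v ∈ Finset.Icc 1 N, ∑ j ∈ Finset.range v,
      (Y ^ (v - 1 - j))ᵀ ⊗ₖ (A v * Y ^ j)) a b ≤
      (∑ v ∈ Finset.Icc 1 N, ∑ j ∈ Finset.range v,
      (G ^ (v - 1 - j))ᵀ ⊗ₖ (A v * G ^ j)) a b := by
    intro a b
    simp only [Matrix.sum_apply]
    refine Finset.sum_le_sum fun v hv => Finset.sum_le_sum fun j _ => ?_
    have hvN := (Finset.mem_Icc.mp hv).2
    rw [Matrix.kroneckerMap_apply, Matrix.kroneckerMap_apply, Matrix.transpose_apply,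
      Matrix.transpose_apply]
    exact mul_le_mul (epow_le hY0 hYG _ _ _)
      (emul_le (hA v hvN) (epow_nonneg hY0 j) (fun i j => le_refl _) (epow_le hY0 hYG j) _ _)
      (emul_nonneg (hA v hvN) (epow_nonneg hY0 j) _ _)
      (epow_nonneg hG0 _ _ _)
  have hvec : ∀ (q : Fin m × Fin m),
      ((1 - ∑ v ∈ Finset.Icc 1 N, ∑ j ∈ Finset.range v,
        (Y ^ (v - 1 - j))ᵀ ⊗ₖ (A v * Y ^ j)).mulVec (fun r => X r.2 r.1)) q
      = (X - ∑ v ∈ Finset.Icc 1 N, ∑ j ∈ Finset.range v,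
        A v * Y ^ j * X * Y ^ (v - 1 - j)) q.2 q.1 := by
    intro q
    rw [Matrix.sub_mulVec]
    simp only [Pi.sub_apply, Matrix.one_mulVec]
    rw [sum_mulVec_apply]
    have : ∀ v ∈ Finset.Icc 1 N,
        ((∑ j ∈ Finset.range v, (Y ^ (v - 1 - j))ᵀ ⊗ₖ (A v * Y ^ j)).mulVec
          (fun r => X r.2 r.1)) q
        = ∑ j ∈ Finset.range v, (A v * Y ^ j * X * Y ^ (v - 1 - j)) q.2 q.1 := by
      intro v _
      rw [sum_mulVec_apply]
      refine Finset.sum_congr rfl fun j _ => ?_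
      rw [kron_mulVec]
    rw [Finset.sum_congr rfl this]
    simp only [Matrix.sub_apply, Matrix.sum_apply]
  have := mkey hMG hK0 hKle (fun r => X r.2 r.1) (fun q => by rw [hvec q]; exact hpos _ _)
  intro i j
  exact this (j, i)

end NSaux

open NSaux in
theorem stmt9 (m N : ℕ) (hm : 1 ≤ m) (hN : 1 ≤ N)
    (A : ℕ → Matrix (Fin m) (Fin m) ℝ)
    (hA : ∀ v, v ≤ N → ∀ i j, 0 ≤ A v i j)
    (G : Matrix (Fin m) (Fin m) ℝ)
    (hG0 : ∀ i j, 0 ≤ G i j)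
    (hGsol : ∑ v ∈ Finset.range (N + 1), A v * G ^ v = G)
    (hGmin : ∀ S : Matrix (Fin m) (Fin m) ℝ, (∀ i j, 0 ≤ S i j) →
      ∑ v ∈ Finset.range (N + 1), A v * S ^ v = S → ∀ i j, G i j ≤ S i j)
    (hMG : IsNonsingMMatrix
      ((1 : Matrix (Fin m × Fin m) (Fin m × Fin m) ℝ) -
      ∑ v ∈ Finset.Icc 1 N, ∑ j ∈ Finset.range v,
        (G ^ (v - 1 - j))ᵀ ⊗ₖ (A v * G ^ j)))
    (n : ℕ → ℕ) (hn : ∀ k, 1 ≤ n k)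
    (Gs : ℕ → ℕ → Matrix (Fin m) (Fin m) ℝ)
    (hG00 : ∀ i j, 0 ≤ (∑ v ∈ Finset.range (N + 1), A v * (Gs 0 0) ^ v - (Gs 0 0)) i j)
    (hG00' : ∀ i j, 0 ≤ Gs 0 0 i j) (hG00'' : ∀ i j, Gs 0 0 i j ≤ G i j)
    (hM00 : IsNonsingMMatrix
      ((1 : Matrix (Fin m × Fin m) (Fin m × Fin m) ℝ) -
      ∑ v ∈ Finset.Icc 1 N, ∑ j ∈ Finset.range v,
        ((Gs 0 0) ^ (v - 1 - j))ᵀ ⊗ₖ (A v * (Gs 0 0) ^ j)))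
    (hlink : ∀ k, Gs (k + 1) 0 = Gs k (n k))
    (heq : ∀ k s, 1 ≤ s → s ≤ n k →
      ∑ v ∈ Finset.Icc 1 N, ∑ j ∈ Finset.range v,
        A v * (Gs k 0) ^ j * (Gs k s - Gs k (s - 1)) * (Gs k 0) ^ (v - 1 - j) -
          (Gs k s - Gs k (s - 1)) =
        -(∑ v ∈ Finset.range (N + 1), A v * (Gs k (s - 1)) ^ v - (Gs k (s - 1))))
    :
    ∀ k s, 1 ≤ s → s ≤ n k →
      (∀ i j, Gs k (s - 1) i j ≤ Gs k s i j) ∧ (∀ i j, Gs k s i j ≤ G i j) := by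
  -- the inner (per-cycle) induction
  have step : ∀ (k : ℕ),
      (∀ i j, 0 ≤ Gs k 0 i j) → (∀ i j, Gs k 0 i j ≤ G i j) →
      (∀ i j, 0 ≤ (∑ v ∈ Finset.range (N + 1), A v * (Gs k 0) ^ v - Gs k 0) i j) →
      ∀ s, s ≤ n k →
        ((∀ i j, Gs k 0 i j ≤ Gs k s i j) ∧ (∀ i j, Gs k s i j ≤ G i j) ∧
         (∀ i j, 0 ≤ (∑ v ∈ Finset.range (N + 1), A v * (Gs k s) ^ v - Gs k s) i j) ∧
         (1 ≤ s → ∀ i j, Gs k (s - 1) i j ≤ Gs k s i j)) := by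
    intro k h0 h0G h0g s
    induction s with
    | zero =>
      intro _
      exact ⟨fun i j => le_refl _, h0G, h0g, fun h => absurd h (by omega)⟩
    | succ s ih =>
      intro hsn
      obtain ⟨ih1, ih2, ih3, _⟩ := ih (by omega)
      have hW0 : ∀ i j, 0 ≤ Gs k s i j := fun i j => (h0 i j).trans (ih1 i j)
      have heqk := heq k (s + 1) (by omega) hsn
      simp only [Nat.add_sub_cancel] at heqk
      -- h1 : (U - W) - L Y (U - W) = 𝒢 W
      have h1 : (Gs k (s+1) - Gs k s) -
          ∑ v ∈ Finset.Icc 1 N, ∑ j ∈ Finset.range v,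
            A v * (Gs k 0) ^ j * (Gs k (s+1) - Gs k s) * (Gs k 0) ^ (v - 1 - j)
          = ∑ v ∈ Finset.range (N + 1), A v * (Gs k s) ^ v - Gs k s := by
        rw [← neg_sub, heqk, neg_neg]
      -- X ≥ 0
      have hX0 : ∀ i j, 0 ≤ (Gs k (s+1) - Gs k s) i j := by
        refine solve_aux A hA G hG0 hMG (Gs k 0) _ h0 h0G ?_
        intro i j
        rw [h1]
        exact ih3 i j
      have hWU : ∀ i j, Gs k s i j ≤ Gs k (s+1) i j := by
        intro i j
        have := hX0 i j
        rw [Matrix.sub_apply] at this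
        linarith
      have hYU : ∀ i j, Gs k 0 i j ≤ Gs k (s+1) i j :=
        fun i j => (ih1 i j).trans (hWU i j)
      -- 𝒢 W in terms of G :  𝒢 W = (G - W) - Σ_Icc A_v (G^v - W^v)... as used below
      have hGamW : ∑ v ∈ Finset.range (N + 1), A v * (Gs k s) ^ v - Gs k s
          = (G - Gs k s) - (∑ v ∈ Finset.Icc 1 N, A v * (G ^ v - (Gs k s) ^ v))
              + (Gs k s - Gs k s) := by
        have e := sum_Icc_eq N A G (Gs k s)
        rw [hGsol] at e
        rw [← e]
        abel
      -- h2 : (G - U) - L Y (G - U) = Σ_Icc A_v (G^v − W^v) − L Y (G − W)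
      have h2 : (G - Gs k (s+1)) -
          ∑ v ∈ Finset.Icc 1 N, ∑ j ∈ Finset.range v,
            A v * (Gs k 0) ^ j * (G - Gs k (s+1)) * (Gs k 0) ^ (v - 1 - j)
          = (∑ v ∈ Finset.Icc 1 N, A v * (G ^ v - (Gs k s) ^ v))
            - ∑ v ∈ Finset.Icc 1 N, ∑ j ∈ Finset.range v,
              A v * (Gs k 0) ^ j * (G - Gs k s) * (Gs k 0) ^ (v - 1 - j) := by
        have hGU : G - Gs k (s+1) = (G - Gs k s) - (Gs k (s+1) - Gs k s) := by abel
        rw [hGU, L_sub]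
        have h1' := h1
        -- rearrange
        have : (G - Gs k s) - (Gs k (s+1) - Gs k s) -
            ((∑ v ∈ Finset.Icc 1 N, ∑ j ∈ Finset.range v,
              A v * (Gs k 0) ^ j * (G - Gs k s) * (Gs k 0) ^ (v - 1 - j))
             - ∑ v ∈ Finset.Icc 1 N, ∑ j ∈ Finset.range v,
              A v * (Gs k 0) ^ j * (Gs k (s+1) - Gs k s) * (Gs k 0) ^ (v - 1 - j))
            = (G - Gs k s)
              - (∑ v ∈ Finset.Icc 1 N, ∑ j ∈ Finset.range v,
                A v * (Gs k 0) ^ j * (G - Gs k s) * (Gs k 0) ^ (v - 1 - j))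
              - ((Gs k (s+1) - Gs k s)
                - ∑ v ∈ Finset.Icc 1 N, ∑ j ∈ Finset.range v,
                  A v * (Gs k 0) ^ j * (Gs k (s+1) - Gs k s) * (Gs k 0) ^ (v - 1 - j)) := by
          abel
        rw [this, h1', hGamW]
        abel
      -- U ≤ G
      have hUG : ∀ i j, Gs k (s+1) i j ≤ G i j := by
        have hZ0 : ∀ i j, 0 ≤ (G - Gs k (s+1)) i j := by
          refine solve_aux A hA G hG0 hMG (Gs k 0) _ h0 h0G ?_
          intro i j
          rw [h2]
          have hc := core A hA (Gs k 0) (Gs k s) G h0 ih1 ih2 i j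
          rw [Matrix.sub_apply]
          linarith
        intro i j
        have := hZ0 i j
        rw [Matrix.sub_apply] at this
        linarith
      -- 𝒢 U ≥ 0
      have hGamU : ∀ i j, 0 ≤ (∑ v ∈ Finset.range (N + 1), A v * (Gs k (s+1)) ^ v
          - Gs k (s+1)) i j := by
        have h3 : ∑ v ∈ Finset.range (N + 1), A v * (Gs k (s+1)) ^ v - Gs k (s+1)
            = (∑ v ∈ Finset.Icc 1 N, A v * ((Gs k (s+1)) ^ v - (Gs k s) ^ v))
              - ∑ v ∈ Finset.Icc 1 N, ∑ j ∈ Finset.range v,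
                A v * (Gs k 0) ^ j * (Gs k (s+1) - Gs k s) * (Gs k 0) ^ (v - 1 - j) := by
          have e := sum_Icc_eq N A (Gs k (s+1)) (Gs k s)
          have h1' := h1
          have e2 : ∑ v ∈ Finset.range (N + 1), A v * (Gs k (s+1)) ^ v
              = (∑ v ∈ Finset.Icc 1 N, A v * ((Gs k (s+1)) ^ v - (Gs k s) ^ v))
                + ∑ v ∈ Finset.range (N + 1), A v * (Gs k s) ^ v := by
            rw [← e]; abel
          rw [e2]
          have hL : ∑ v ∈ Finset.Icc 1 N, ∑ j ∈ Finset.range v,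
              A v * (Gs k 0) ^ j * (Gs k (s+1) - Gs k s) * (Gs k 0) ^ (v - 1 - j)
              = (Gs k (s+1) - Gs k s)
                - (∑ v ∈ Finset.range (N + 1), A v * (Gs k s) ^ v - Gs k s) := by
            rw [← h1']; abel
          rw [hL]
          abel
        intro i j
        rw [h3]
        have hc := core A hA (Gs k 0) (Gs k s) (Gs k (s+1)) h0 ih1 hWU i j
        rw [Matrix.sub_apply]
        linarith
      exact ⟨hYU, hUG, hGamU, fun _ => by simpa using hWU⟩
  -- outer induction on cycles
  have outer : ∀ k, (∀ i j, 0 ≤ Gs k 0 i j) ∧ (∀ i j, Gs k 0 i j ≤ G i j) ∧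
      (∀ i j, 0 ≤ (∑ v ∈ Finset.range (N + 1), A v * (Gs k 0) ^ v - Gs k 0) i j) := by
    intro k
    induction k with
    | zero => exact ⟨hG00', hG00'', hG00⟩
    | succ k ih =>
      obtain ⟨ih0, ihG, ihg⟩ := ih
      obtain ⟨c1, c2, c3, _⟩ := step k ih0 ihG ihg (n k) (le_refl _)
      refine ⟨?_, ?_, ?_⟩ <;> rw [hlink k]
      · exact fun i j => (ih0 i j).trans (c1 i j)
      · exact c2
      · exact c3
  intro k s hs1 hs2
  obtain ⟨o1, o2, o3⟩ := outer k
  obtain ⟨c1, c2, c3, c4⟩ := step k o1 o2 o3 s hs2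
  exact ⟨c4 hs1, c2⟩
end

section
/- Suppose I − Σ_{v=1}^{N} Σ_{j=0}^{v-1} (G^{v-1-j})ᵀ ⊗ (A_v G^{j}) is a nonsingular M-matrix, and suppose the initial matrix G_{0,0} satisfies (i) 𝒢(G_{0,0}) ≥ 0, (ii) 0 ≤ G_{0,0} ≤ G, and (iii) I − Σ_{v=1}^{N} Σ_{j=0}^{v-1} (G_{0,0}^{v-1-j})ᵀ ⊗ (A_v G_{0,0}^{j}) is a nonsingular M-matrix. Then for every Newton–Shamanskii sequence (G_{k,s}) with these data, the matrices G_k := G_{k,0} converge entrywise to G as k → ∞. -/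
open Matrix Finset Kronecker
open scoped ENNReal

open Filter
open scoped Topology

section A
attribute [local instance] Matrix.linftyOpNormedRing Matrix.linftyOpNormedAlgebra
variable {q : Type*} [Fintype q] [DecidableEq q]

lemma entry_abs_le_norm (M : Matrix q q ℂ) (i j : q) : ‖M i j‖ ≤ ‖M‖ := by
  rw [Matrix.linfty_opNorm_def]
  have h1 : ‖M i j‖₊ ≤ ∑ l, ‖M i l‖₊ :=
    Finset.single_le_sum (f := fun l => ‖M i l‖₊) (fun l _ => zero_le) (Finset.mem_univ j)
  have h2 : (∑ l, ‖M i l‖₊) ≤ (Finset.univ : Finset q).sup fun i => ∑ l, ‖M i l‖₊ :=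
    Finset.le_sup (f := fun i => ∑ l, ‖M i l‖₊) (Finset.mem_univ i)
  exact_mod_cast h1.trans h2

lemma specRad_pow_bound (B : Matrix q q ℝ) (s : ℝ) (h : specRad B < ENNReal.ofReal s) :
    ∃ t : ℝ, 0 ≤ t ∧ t < s ∧ ∀ᶠ K in atTop, ∀ i j, |(B ^ K) i j| ≤ t ^ K := by
  haveI : CompleteSpace (Matrix q q ℂ) :=
    FiniteDimensional.complete ℂ _
  set C : Matrix q q ℂ := B.map (algebraMap ℝ ℂ) with hC
  obtain ⟨r, hr1, hr2⟩ := exists_between h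
  have hrtop : r ≠ ⊤ := (hr2.trans_le le_top).ne
  have gel := spectrum.pow_nnnorm_pow_one_div_tendsto_nhds_spectralRadius (a := C)
  have hs : 0 < s := ENNReal.ofReal_pos.mp (zero_le.trans_lt h)
  have hev : ∀ᶠ K : ℕ in atTop, ((‖C ^ K‖₊ : ℝ≥0∞) ^ (1 / (K:ℝ))) < r :=
    gel.eventually_lt_const hr1
  refine ⟨r.toReal, ENNReal.toReal_nonneg, ?_, ?_⟩
  · have := (ENNReal.toReal_lt_toReal hrtop ENNReal.ofReal_ne_top).mpr hr2
    rwa [ENNReal.toReal_ofReal hs.le] at this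
  · filter_upwards [hev, eventually_ge_atTop 1] with K hK hK1 i j
    have hKne : (K:ℝ) ≠ 0 := by positivity
    have h5 : (‖C ^ K‖₊ : ℝ≥0∞) ≤ r ^ K := by
      calc (‖C ^ K‖₊ : ℝ≥0∞) = ((‖C ^ K‖₊ : ℝ≥0∞) ^ (1/(K:ℝ))) ^ K := by
            rw [← ENNReal.rpow_natCast _ K, ← ENNReal.rpow_mul, one_div,
              inv_mul_cancel₀ hKne, ENNReal.rpow_one]
        _ ≤ r ^ K := pow_le_pow_left' hK.le K
    have h6 : ‖C ^ K‖ ≤ r.toReal ^ K := by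
      have := ENNReal.toReal_mono (ENNReal.pow_ne_top hrtop) h5
      rwa [ENNReal.toReal_pow, ENNReal.coe_toReal, coe_nnnorm] at this
    have hmap : C ^ K = (B ^ K).map (algebraMap ℝ ℂ) := by
      rw [hC, ← RingHom.mapMatrix_apply, ← RingHom.mapMatrix_apply, map_pow]
    have h7 : |(B ^ K) i j| ≤ ‖C ^ K‖ := by
      rw [hmap]
      simpa [Matrix.map_apply, Real.norm_eq_abs] using
        entry_abs_le_norm ((B ^ K).map (algebraMap ℝ ℂ)) i j
    exact h7.trans h6
end A
section B
open Matrix Filter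
variable {q : Type*} [Fintype q] [DecidableEq q]

lemma mat_mul_nonneg {X Y : Matrix q q ℝ} (hX : ∀ i j, 0 ≤ X i j) (hY : ∀ i j, 0 ≤ Y i j) :
    ∀ i j, 0 ≤ (X * Y) i j := fun i j =>
  Finset.sum_nonneg fun l _ => mul_nonneg (hX i l) (hY l j)

lemma mat_mul_le_mul {X X' Y Y' : Matrix q q ℝ} (hX : ∀ i j, 0 ≤ X i j) (hY : ∀ i j, 0 ≤ Y i j)
    (hXX : ∀ i j, X i j ≤ X' i j) (hYY : ∀ i j, Y i j ≤ Y' i j) :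
    ∀ i j, (X * Y) i j ≤ (X' * Y') i j := fun i j => by
  simp only [Matrix.mul_apply]
  exact Finset.sum_le_sum fun l _ =>
    mul_le_mul (hXX i l) (hYY l j) (hY l j) ((hX i l).trans (hXX i l))

lemma mat_pow_nonneg {X : Matrix q q ℝ} (hX : ∀ i j, 0 ≤ X i j) (p : ℕ) :
    ∀ i j, 0 ≤ (X ^ p) i j := by
  induction p with
  | zero => intro i j; simp [Matrix.one_apply]; split <;> norm_num
  | succ p ih => rw [pow_succ]; exact mat_mul_nonneg ih hX

lemma mat_pow_le_pow {X Y : Matrix q q ℝ} (hX : ∀ i j, 0 ≤ X i j)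
    (hXY : ∀ i j, X i j ≤ Y i j) (p : ℕ) : ∀ i j, (X ^ p) i j ≤ (Y ^ p) i j := by
  induction p with
  | zero => intro i j; simp
  | succ p ih =>
      rw [pow_succ, pow_succ]
      exact mat_mul_le_mul (mat_pow_nonneg hX p) hX ih hXY

lemma mat_mulVec_nonneg {X : Matrix q q ℝ} (hX : ∀ i j, 0 ≤ X i j) {v : q → ℝ}
    (hv : ∀ i, 0 ≤ v i) : ∀ i, 0 ≤ (X *ᵥ v) i := fun i =>
  Finset.sum_nonneg fun l _ => mul_nonneg (hX i l) (hv l)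

lemma mat_mulVec_mono {X : Matrix q q ℝ} (hX : ∀ i j, 0 ≤ X i j) {u v : q → ℝ}
    (huv : ∀ i, u i ≤ v i) : ∀ i, (X *ᵥ u) i ≤ (X *ᵥ v) i := fun i =>
  Finset.sum_le_sum fun l _ => mul_le_mul_of_nonneg_left (huv l) (hX i l)

lemma mmatrix_inv_pos (s : ℝ) (B B' : Matrix q q ℝ)
    (hB : ∀ i j, 0 ≤ B i j) (hs : specRad B < ENNReal.ofReal s)
    (hB'0 : ∀ i j, 0 ≤ B' i j) (hB'B : ∀ i j, B' i j ≤ B i j)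
    (x b : q → ℝ) (hb : ∀ i, 0 ≤ b i)
    (hx : s • x - B' *ᵥ x = b) : ∀ i, 0 ≤ x i := by
  have hs0 : 0 < s := ENNReal.ofReal_pos.mp (zero_le.trans_lt hs)
  set C' : Matrix q q ℝ := s⁻¹ • B' with hC'
  have hC'0 : ∀ i j, 0 ≤ C' i j := fun i j =>
    mul_nonneg (inv_nonneg.mpr hs0.le) (hB'0 i j)
  -- x = C' *ᵥ x + s⁻¹ • b
  have hxe : C' *ᵥ x = x - s⁻¹ • b := by
    have : B' *ᵥ x = s • x - b := by rw [← hx]; ring_nf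
    rw [hC', Matrix.smul_mulVec, this, smul_sub, smul_smul, inv_mul_cancel₀ hs0.ne',
      one_smul]
  have hCpow : ∀ K : ℕ, ∀ i, ((C' ^ K) *ᵥ x) i ≤ x i := by
    intro K
    induction K with
    | zero => intro i; simp
    | succ K ih =>
        intro i
        have h1 : ((C' ^ (K + 1)) *ᵥ x) = (C' ^ K) *ᵥ (C' *ᵥ x) := by
          rw [Matrix.mulVec_mulVec, ← pow_succ]
        have h2 : ∀ i, (C' *ᵥ x) i ≤ x i := by
          intro i
          rw [hxe]
          have : 0 ≤ (s⁻¹ • b) i := mul_nonneg (inv_nonneg.mpr hs0.le) (hb i)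
          simp only [Pi.sub_apply]; linarith
        calc ((C' ^ (K + 1)) *ᵥ x) i = ((C' ^ K) *ᵥ (C' *ᵥ x)) i := by rw [h1]
          _ ≤ ((C' ^ K) *ᵥ x) i := mat_mulVec_mono (mat_pow_nonneg hC'0 K) h2 i
          _ ≤ x i := ih i
  -- lower bound: (C'^K *ᵥ x) i ≥ - ((s⁻¹•B)^K *ᵥ |x|) i
  set C : Matrix q q ℝ := s⁻¹ • B with hC
  have hCC' : ∀ i j, C' i j ≤ C i j := fun i j =>
    mul_le_mul_of_nonneg_left (hB'B i j) (inv_nonneg.mpr hs0.le)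
  set ax : q → ℝ := fun i => |x i| with hax
  have hlow : ∀ K : ℕ, ∀ i, -(((C ^ K) *ᵥ ax) i) ≤ ((C' ^ K) *ᵥ x) i := by
    intro K i
    have h1 : |((C' ^ K) *ᵥ x) i| ≤ ((C ^ K) *ᵥ ax) i := by
      calc |((C' ^ K) *ᵥ x) i| ≤ ∑ l, |(C' ^ K) i l * x l| := Finset.abs_sum_le_sum_abs _ _
        _ ≤ ((C ^ K) *ᵥ ax) i := Finset.sum_le_sum fun l _ => by
            rw [abs_mul, abs_of_nonneg (mat_pow_nonneg hC'0 K i l)]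
            exact mul_le_mul_of_nonneg_right
              (mat_pow_le_pow hC'0 hCC' K i l) (abs_nonneg _)
    linarith [neg_abs_le (((C' ^ K) *ᵥ x) i), abs_le.mp h1]
  -- tendsto
  obtain ⟨t, ht0, hts, hev⟩ := specRad_pow_bound B s hs
  have htend : ∀ i, Tendsto (fun K => ((C ^ K) *ᵥ ax) i) atTop (nhds 0) := by
    intro i
    apply squeeze_zero_norm'
    · filter_upwards [hev] with K hK
      have hCK : (C ^ K) = (s⁻¹) ^ K • (B ^ K) := by
        rw [hC, smul_pow]
      calc ‖((C ^ K) *ᵥ ax) i‖ ≤ ∑ l, |(C ^ K) i l * ax l| := Finset.abs_sum_le_sum_abs _ _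
        _ ≤ ∑ l : q, (s⁻¹) ^ K * t ^ K * ax l := Finset.sum_le_sum fun l _ => by
            have h1 : |(C ^ K) i l| ≤ s⁻¹ ^ K * t ^ K := by
              rw [hCK, Matrix.smul_apply, smul_eq_mul, abs_mul,
                abs_of_nonneg (by positivity : (0:ℝ) ≤ s⁻¹ ^ K)]
              exact mul_le_mul_of_nonneg_left (hK i l) (by positivity)
            have h2 : (0:ℝ) ≤ ax l := abs_nonneg _
            calc |(C ^ K) i l * ax l| = |(C ^ K) i l| * ax l := by
                  rw [abs_mul, abs_of_nonneg h2]
              _ ≤ s⁻¹ ^ K * t ^ K * ax l := mul_le_mul_of_nonneg_right h1 h2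
        _ = (t / s) ^ K * ∑ l, ax l := by
            rw [← Finset.mul_sum, div_pow, division_def, inv_pow]; ring
    · have h1 : Tendsto (fun K : ℕ => (t / s) ^ K) atTop (nhds 0) := by
        apply tendsto_pow_atTop_nhds_zero_of_lt_one (by positivity)
        rw [div_lt_one hs0]; exact hts
      simpa using h1.mul_const (∑ l, ax l)
  intro i
  have : Tendsto (fun K => -(((C ^ K) *ᵥ ax) i)) atTop (nhds 0) := by
    simpa using (htend i).neg
  exact le_of_tendsto' this fun K => (hlow K i).trans (hCpow K i)
end B
section C
open Matrix
variable {q : Type*} [Fintype q] [DecidableEq q]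

lemma specRad_add_smul_one (B : Matrix q q ℝ) (t : ℝ) (ht : 0 ≤ t) :
    specRad (B + t • (1 : Matrix q q ℝ)) ≤ specRad B + ENNReal.ofReal t := by
  have hmap : (B + t • (1 : Matrix q q ℝ)).map (algebraMap ℝ ℂ)
      = algebraMap ℂ (Matrix q q ℂ) (t : ℂ) + B.map (algebraMap ℝ ℂ) := by
    ext i j
    by_cases h : i = j <;>
      simp [Matrix.map_apply, Matrix.one_apply, h, Algebra.algebraMap_eq_smul_one,
        Matrix.smul_apply, Matrix.add_apply, add_comm]
  rw [specRad, hmap]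
  have hspec := spectrum.singleton_add_eq (R := ℂ) (B.map (algebraMap ℝ ℂ)) (t : ℂ)
  rw [spectralRadius, ← hspec]
  apply iSup₂_le
  intro k hk
  rw [Set.singleton_add] at hk
  obtain ⟨w, hw, rfl⟩ := hk
  have h1 : (‖(t : ℂ) + w‖₊ : ℝ≥0∞) ≤ (‖w‖₊ : ℝ≥0∞) + ENNReal.ofReal t := by
    have := nnnorm_add_le (t : ℂ) w
    have h2 : ‖(t : ℂ)‖₊ = t.toNNReal := by
      rw [Complex.nnnorm_real, Real.nnnorm_of_nonneg ht]
      ext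
      simp [Real.coe_toNNReal t ht]
    calc (‖(t : ℂ) + w‖₊ : ℝ≥0∞) ≤ (‖(t : ℂ)‖₊ : ℝ≥0∞) + ‖w‖₊ := by exact_mod_cast this
      _ = (‖w‖₊ : ℝ≥0∞) + ENNReal.ofReal t := by
          rw [h2, ENNReal.ofReal, add_comm]
  refine h1.trans (add_le_add_left ?_ _)
  exact le_iSup₂ (f := fun k (_ : k ∈ spectrum ℂ (B.map (algebraMap ℝ ℂ))) => (‖k‖₊ : ℝ≥0∞)) w hw
end C
section D
open Matrix Kronecker
variable {q : Type*} [Fintype q] [DecidableEq q]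

/-- vectorization: `vecm X (i, j) = X j i`. -/
def vecm (X : Matrix q q ℝ) : q × q → ℝ := fun p => X p.2 p.1

lemma kron_mulVec_s10 (Bm Am X : Matrix q q ℝ) (p : q × q) :
    ((Bmᵀ ⊗ₖ Am) *ᵥ vecm X) p = (Am * X * Bm) p.2 p.1 := by
  simp only [Matrix.mulVec, dotProduct, Matrix.kroneckerMap_apply, Matrix.transpose_apply,
    Matrix.mul_apply, vecm]
  rw [Fintype.sum_prod_type]
  simp_rw [Finset.sum_mul]
  exact Finset.sum_congr rfl fun k _ => Finset.sum_congr rfl fun l _ => by ring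

lemma sum_mulVec {r : Type*} [Fintype r] {α : Type*} (t : Finset α) (f : α → Matrix r r ℝ)
    (x : r → ℝ) (p : r) :
    ((∑ a ∈ t, f a) *ᵥ x) p = ∑ a ∈ t, ((f a) *ᵥ x) p := by
  simp only [Matrix.mulVec, dotProduct, Finset.sum_apply, Matrix.sum_apply, Finset.sum_mul]
  rw [Finset.sum_comm]
end D

section E
open Matrix
variable {q : Type*} [Fintype q] [DecidableEq q]

lemma mat_sum_nonneg {α : Type*} (t : Finset α) (f : α → Matrix q q ℝ)
    (hf : ∀ a ∈ t, ∀ i j, 0 ≤ f a i j) : ∀ i j, 0 ≤ (∑ a ∈ t, f a) i j := by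
  intro i j
  rw [Matrix.sum_apply]
  exact Finset.sum_nonneg fun a ha => hf a ha i j

lemma mat_expand {Y X : Matrix q q ℝ} (hY : ∀ i j, 0 ≤ Y i j) (hX : ∀ i j, 0 ≤ X i j) (v : ℕ) :
    ∀ i j, (Y ^ v) i j + (∑ l ∈ Finset.range v, Y ^ l * X * Y ^ (v - 1 - l)) i j
      ≤ ((Y + X) ^ v) i j := by
  induction v with
  | zero => intro i j; simp
  | succ v ih =>
      intro i j
      have hYX : ∀ i j, 0 ≤ (Y + X) i j := fun i j => add_nonneg (hY i j) (hX i j)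
      set S := ∑ l ∈ Finset.range v, Y ^ l * X * Y ^ (v - 1 - l) with hS
      have hS0 : ∀ i j, 0 ≤ S i j :=
        mat_sum_nonneg _ _ fun l _ => mat_mul_nonneg (mat_mul_nonneg (mat_pow_nonneg hY l) hX)
          (mat_pow_nonneg hY _)
      have hYvS : ∀ i j, 0 ≤ (Y ^ v + S) i j := fun i j =>
        add_nonneg (mat_pow_nonneg hY v i j) (hS0 i j)
      have hkey : Y ^ (v + 1) + ∑ l ∈ Finset.range (v + 1), Y ^ l * X * Y ^ (v - l)
          = Y * Y ^ v + Y * S + X * Y ^ v := by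
        rw [Finset.sum_range_succ' (fun l => Y ^ l * X * Y ^ (v - l)) v]
        have h1 : ∀ l, l ∈ Finset.range v → Y ^ (l + 1) * X * Y ^ (v - (l + 1))
            = Y * (Y ^ l * X * Y ^ (v - 1 - l)) := by
          intro l _
          rw [show v - (l + 1) = v - 1 - l by omega, pow_succ', mul_assoc, mul_assoc, mul_assoc]
        rw [Finset.sum_congr rfl h1, ← Finset.mul_sum, ← hS, pow_succ']
        simp only [pow_zero, one_mul, Nat.sub_zero]
        abel
      have hsucc : ∀ l, (v + 1) - 1 - l = v - l := fun l => by omega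
      calc (Y ^ (v + 1)) i j + (∑ l ∈ Finset.range (v + 1), Y ^ l * X * Y ^ ((v+1) - 1 - l)) i j
          = (Y * Y ^ v + Y * S + X * Y ^ v) i j := by
            simp_rw [hsucc]
            rw [← Matrix.add_apply, hkey]
        _ ≤ ((Y + X) * (Y ^ v + S)) i j := by
            have hexp : (Y + X) * (Y ^ v + S) = Y * Y ^ v + Y * S + X * Y ^ v + X * S := by
              noncomm_ring
            rw [hexp]
            have := mat_mul_nonneg hX hS0 i j
            simp only [Matrix.add_apply]
            linarith
        _ ≤ ((Y + X) ^ (v + 1)) i j := by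
            rw [pow_succ']
            exact mat_mul_le_mul hYX hYvS (fun i j => le_refl _)
              (fun i j => by simpa [Matrix.add_apply] using ih i j) i j
end E
section F
open Matrix Kronecker
variable {q : Type*} [Fintype q] [DecidableEq q]

noncomputable def Fop (N : ℕ) (A : ℕ → Matrix q q ℝ) (X : Matrix q q ℝ) : Matrix q q ℝ :=
  ∑ v ∈ Finset.range (N + 1), A v * X ^ v

noncomputable def Lop (N : ℕ) (A : ℕ → Matrix q q ℝ) (W X : Matrix q q ℝ) : Matrix q q ℝ :=
  ∑ v ∈ Finset.Icc 1 N, ∑ j ∈ Finset.range v, A v * W ^ j * X * W ^ (v - 1 - j)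

noncomputable def Kop (N : ℕ) (A : ℕ → Matrix q q ℝ) (W : Matrix q q ℝ) :
    Matrix (q × q) (q × q) ℝ :=
  ∑ v ∈ Finset.Icc 1 N, ∑ j ∈ Finset.range v, (W ^ (v - 1 - j))ᵀ ⊗ₖ (A v * W ^ j)

variable {N : ℕ} {A : ℕ → Matrix q q ℝ}

lemma Kop_nonneg (hA : ∀ v ∈ Finset.Icc 1 N, ∀ i j, 0 ≤ A v i j) {W : Matrix q q ℝ}
    (hW : ∀ i j, 0 ≤ W i j) : ∀ p p', 0 ≤ Kop N A W p p' := by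
  intro p p'
  rw [Kop]
  refine mat_sum_nonneg _ _ (fun v hv => mat_sum_nonneg _ _ (fun l _ => fun i j => ?_)) p p'
  rw [Matrix.kroneckerMap_apply, Matrix.transpose_apply]
  exact mul_nonneg (mat_pow_nonneg hW _ _ _) (mat_mul_nonneg (hA v hv) (mat_pow_nonneg hW _) _ _)

lemma Kop_mono (hA : ∀ v ∈ Finset.Icc 1 N, ∀ i j, 0 ≤ A v i j) {W Y : Matrix q q ℝ}
    (hW : ∀ i j, 0 ≤ W i j) (hWY : ∀ i j, W i j ≤ Y i j) :
    ∀ p p', Kop N A W p p' ≤ Kop N A Y p p' := by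
  intro p p'
  rw [Kop, Kop]
  simp only [Matrix.sum_apply]
  refine Finset.sum_le_sum fun v hv => Finset.sum_le_sum fun l _ => ?_
  rw [Matrix.kroneckerMap_apply, Matrix.kroneckerMap_apply, Matrix.transpose_apply,
    Matrix.transpose_apply]
  exact mul_le_mul (mat_pow_le_pow hW hWY _ _ _)
    (mat_mul_le_mul (hA v hv) (mat_pow_nonneg hW _) (fun i j => le_refl _)
      (mat_pow_le_pow hW hWY _) _ _)
    (mat_mul_nonneg (hA v hv) (mat_pow_nonneg hW _) _ _) (mat_pow_nonneg
      (fun i j => (hW i j).trans (hWY i j)) _ _ _)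

lemma Lop_nonneg (hA : ∀ v ∈ Finset.Icc 1 N, ∀ i j, 0 ≤ A v i j) {W X : Matrix q q ℝ}
    (hW : ∀ i j, 0 ≤ W i j) (hX : ∀ i j, 0 ≤ X i j) : ∀ i j, 0 ≤ Lop N A W X i j := by
  rw [Lop]
  exact mat_sum_nonneg _ _ fun v hv => mat_sum_nonneg _ _ fun l _ =>
    mat_mul_nonneg (mat_mul_nonneg (mat_mul_nonneg (hA v hv) (mat_pow_nonneg hW _))
      hX) (mat_pow_nonneg hW _)

lemma Lop_mono_W (hA : ∀ v ∈ Finset.Icc 1 N, ∀ i j, 0 ≤ A v i j) {W Y X : Matrix q q ℝ}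
    (hW : ∀ i j, 0 ≤ W i j) (hWY : ∀ i j, W i j ≤ Y i j) (hX : ∀ i j, 0 ≤ X i j) :
    ∀ i j, Lop N A W X i j ≤ Lop N A Y X i j := by
  intro i j
  rw [Lop, Lop]
  simp only [Matrix.sum_apply]
  refine Finset.sum_le_sum fun v hv => Finset.sum_le_sum fun l _ => ?_
  have hY : ∀ i j, 0 ≤ Y i j := fun i j => (hW i j).trans (hWY i j)
  have h1 : ∀ i j, (A v * W ^ l) i j ≤ (A v * Y ^ l) i j :=
    mat_mul_le_mul (hA v hv) (mat_pow_nonneg hW _) (fun i j => le_refl _)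
      (mat_pow_le_pow hW hWY _)
  have h2 : ∀ i j, (A v * W ^ l * X) i j ≤ (A v * Y ^ l * X) i j :=
    mat_mul_le_mul (mat_mul_nonneg (hA v hv) (mat_pow_nonneg hW _)) hX h1 (fun i j => le_refl _)
  exact mat_mul_le_mul (mat_mul_nonneg (mat_mul_nonneg (hA v hv) (mat_pow_nonneg hW _)) hX)
    (mat_pow_nonneg hW _) h2 (mat_pow_le_pow hW hWY _) i j

lemma Lop_sub (W U V : Matrix q q ℝ) :
    Lop N A W (U - V) = Lop N A W U - Lop N A W V := by
  rw [Lop, Lop, Lop, ← Finset.sum_sub_distrib]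
  refine Finset.sum_congr rfl fun v _ => ?_
  rw [← Finset.sum_sub_distrib]
  refine Finset.sum_congr rfl fun l _ => ?_
  rw [mul_sub, sub_mul]

lemma Kop_mulVec (W X : Matrix q q ℝ) (p : q × q) :
    ((Kop N A W) *ᵥ vecm X) p = vecm (Lop N A W X) p := by
  rw [Kop, _root_.sum_mulVec]
  rw [show vecm (Lop N A W X) p = Lop N A W X p.2 p.1 from rfl, Lop]
  simp only [Matrix.sum_apply]
  refine Finset.sum_congr rfl fun v _ => ?_
  rw [_root_.sum_mulVec]
  exact Finset.sum_congr rfl fun l _ => kron_mulVec_s10 _ _ _ _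

lemma Fop_expand (hA : ∀ v, v ≤ N → ∀ i j, 0 ≤ A v i j) {Y X : Matrix q q ℝ}
    (hY : ∀ i j, 0 ≤ Y i j) (hX : ∀ i j, 0 ≤ X i j) :
    ∀ i j, Fop N A Y i j + Lop N A Y X i j ≤ Fop N A (Y + X) i j := by
  intro i j
  have hYX : ∀ i j, 0 ≤ (Y + X) i j := fun i j => add_nonneg (hY i j) (hX i j)
  have hrange : Finset.range (N + 1) = insert 0 (Finset.Icc 1 N) := by
    ext a; simp only [Finset.mem_range, Finset.mem_insert, Finset.mem_Icc]; omega
  have h0 : (0:ℕ) ∉ Finset.Icc 1 N := by simp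
  -- rewrite Lop as a sum over range (N+1)
  have hL : Lop N A Y X = ∑ v ∈ Finset.range (N + 1),
      A v * (∑ l ∈ Finset.range v, Y ^ l * X * Y ^ (v - 1 - l)) := by
    rw [hrange, Finset.sum_insert h0]
    simp only [Finset.range_zero, Finset.sum_empty, mul_zero, zero_add, Lop]
    refine Finset.sum_congr rfl fun v _ => ?_
    rw [Finset.mul_sum]
    refine Finset.sum_congr rfl fun l _ => by rw [mul_assoc, mul_assoc, mul_assoc]
  rw [hL, Fop, Fop]
  simp only [Matrix.sum_apply, ← Finset.sum_add_distrib]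
  refine Finset.sum_le_sum fun v hv => ?_
  have hv' : v ≤ N := by
    rw [Finset.mem_range] at hv; omega
  set Sv := ∑ l ∈ Finset.range v, Y ^ l * X * Y ^ (v - 1 - l) with hSv
  have hSv0 : ∀ i j, 0 ≤ Sv i j :=
    mat_sum_nonneg _ _ fun l _ => mat_mul_nonneg (mat_mul_nonneg (mat_pow_nonneg hY _) hX)
      (mat_pow_nonneg hY _)
  calc (A v * Y ^ v) i j + (A v * Sv) i j = (A v * (Y ^ v + Sv)) i j := by
        rw [mul_add, Matrix.add_apply]
    _ ≤ (A v * (Y + X) ^ v) i j := by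
        refine mat_mul_le_mul (hA v hv') (fun i j => add_nonneg (mat_pow_nonneg hY v i j)
          (hSv0 i j)) (fun i j => le_refl _) (fun i j => mat_expand hY hX v i j) i j
end F
theorem stmt10 (m N : ℕ) (hm : 1 ≤ m) (hN : 1 ≤ N)
    (A : ℕ → Matrix (Fin m) (Fin m) ℝ)
    (hA : ∀ v, v ≤ N → ∀ i j, 0 ≤ A v i j)
    (G : Matrix (Fin m) (Fin m) ℝ)
    (hG0 : ∀ i j, 0 ≤ G i j)
    (hGsol : ∑ v ∈ Finset.range (N + 1), A v * G ^ v = G)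
    (hGmin : ∀ S : Matrix (Fin m) (Fin m) ℝ, (∀ i j, 0 ≤ S i j) →
      ∑ v ∈ Finset.range (N + 1), A v * S ^ v = S → ∀ i j, G i j ≤ S i j)
    (hMG : IsNonsingMMatrix
      ((1 : Matrix (Fin m × Fin m) (Fin m × Fin m) ℝ) -
      ∑ v ∈ Finset.Icc 1 N, ∑ j ∈ Finset.range v,
        (G ^ (v - 1 - j))ᵀ ⊗ₖ (A v * G ^ j)))
    (n : ℕ → ℕ) (hn : ∀ k, 1 ≤ n k)
    (Gs : ℕ → ℕ → Matrix (Fin m) (Fin m) ℝ)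
    (hG00 : ∀ i j, 0 ≤ (∑ v ∈ Finset.range (N + 1), A v * (Gs 0 0) ^ v - (Gs 0 0)) i j)
    (hG00' : ∀ i j, 0 ≤ Gs 0 0 i j) (hG00'' : ∀ i j, Gs 0 0 i j ≤ G i j)
    (hM00 : IsNonsingMMatrix
      ((1 : Matrix (Fin m × Fin m) (Fin m × Fin m) ℝ) -
      ∑ v ∈ Finset.Icc 1 N, ∑ j ∈ Finset.range v,
        ((Gs 0 0) ^ (v - 1 - j))ᵀ ⊗ₖ (A v * (Gs 0 0) ^ j)))
    (hlink : ∀ k, Gs (k + 1) 0 = Gs k (n k))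
    (heq : ∀ k s, 1 ≤ s → s ≤ n k →
      ∑ v ∈ Finset.Icc 1 N, ∑ j ∈ Finset.range v,
        A v * (Gs k 0) ^ j * (Gs k s - Gs k (s - 1)) * (Gs k 0) ^ (v - 1 - j) -
          (Gs k s - Gs k (s - 1)) =
        -(∑ v ∈ Finset.range (N + 1), A v * (Gs k (s - 1)) ^ v - (Gs k (s - 1))))
    :
    ∀ i j, Filter.Tendsto (fun k => Gs k 0 i j) Filter.atTop (nhds (G i j)) := by
  have hA1 : ∀ v ∈ Finset.Icc 1 N, ∀ i j, 0 ≤ A v i j :=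
    fun v hv => hA v (Finset.mem_Icc.mp hv).2
  -- unpack the M-matrix hypothesis and normalize to s' ≥ 1
  obtain ⟨hZ, s, B, hB0, hBrep, hBspec⟩ := hMG
  have hBrep' : (1 : Matrix (Fin m × Fin m) (Fin m × Fin m) ℝ) - Kop N A G
      = s • 1 - B := hBrep
  have hs0 : 0 < s := ENNReal.ofReal_pos.mp (zero_le.trans_lt hBspec)
  set s' : ℝ := max s 1 with hs'def
  have hs'1 : 1 ≤ s' := le_max_right _ _
  have hss' : s ≤ s' := le_max_left _ _
  set B2 : Matrix (Fin m × Fin m) (Fin m × Fin m) ℝ := B + (s' - s) • 1 with hB2def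
  have hB20 : ∀ p p', 0 ≤ B2 p p' := by
    intro p p'
    simp only [hB2def, Matrix.add_apply, Matrix.smul_apply, Matrix.one_apply, smul_eq_mul]
    have h1 := hB0 p p'
    have h2 : 0 ≤ s' - s := sub_nonneg.mpr hss'
    split <;> nlinarith
  have hB2spec : specRad B2 < ENNReal.ofReal s' := by
    refine (specRad_add_smul_one B (s' - s) (sub_nonneg.mpr hss')).trans_lt ?_
    have h2 : ENNReal.ofReal s' = ENNReal.ofReal s + ENNReal.ofReal (s' - s) := by
      rw [← ENNReal.ofReal_add hs0.le (sub_nonneg.mpr hss')]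
      ring_nf
    rw [h2]
    exact ENNReal.add_lt_add_right ENNReal.ofReal_ne_top hBspec
  have hB2eq : B2 = (s' - 1) • (1 : Matrix (Fin m × Fin m) (Fin m × Fin m) ℝ) + Kop N A G := by
    have hB : B = s • (1 : Matrix (Fin m × Fin m) (Fin m × Fin m) ℝ)
        - ((1 : Matrix (Fin m × Fin m) (Fin m × Fin m) ℝ) - Kop N A G) := by
      rw [hBrep']; abel
    rw [hB2def, hB, sub_smul, sub_smul, one_smul]
    abel
  -- the key solvability/positivity tool
  have hsolve : ∀ W X R : Matrix (Fin m) (Fin m) ℝ, (∀ i j, 0 ≤ W i j) →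
      (∀ i j, W i j ≤ G i j) → (∀ i j, 0 ≤ R i j) → X - Lop N A W X = R →
      ∀ i j, 0 ≤ X i j := by
    intro W X R hW0 hWG hR0 hXR
    set BW := (s' - 1) • (1 : Matrix (Fin m × Fin m) (Fin m × Fin m) ℝ) + Kop N A W with hBW
    have hBW0 : ∀ p p', 0 ≤ BW p p' := by
      intro p p'
      simp only [hBW, Matrix.add_apply, Matrix.smul_apply, Matrix.one_apply, smul_eq_mul]
      have h1 := Kop_nonneg hA1 hW0 p p'
      have h2 : 0 ≤ s' - 1 := by linarith
      split <;> nlinarith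
    have hBWB2 : ∀ p p', BW p p' ≤ B2 p p' := by
      intro p p'
      rw [hB2eq, hBW]
      simp only [Matrix.add_apply]
      exact add_le_add_right (Kop_mono hA1 hW0 hWG p p') _
    have hveceq : s' • vecm X - BW *ᵥ vecm X = vecm R := by
      funext p
      have h1 : (BW *ᵥ vecm X) p = (s' - 1) * vecm X p + vecm (Lop N A W X) p := by
        rw [hBW, Matrix.add_mulVec, Matrix.smul_mulVec, Matrix.one_mulVec]
        simp only [Pi.add_apply, Pi.smul_apply, smul_eq_mul]
        rw [Kop_mulVec]
      have h2 : (X - Lop N A W X) p.2 p.1 = R p.2 p.1 := by rw [hXR]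
      simp only [Pi.sub_apply, Pi.smul_apply, smul_eq_mul, h1]
      simp only [Matrix.sub_apply] at h2
      show s' * X p.2 p.1 - ((s' - 1) * X p.2 p.1 + Lop N A W X p.2 p.1) = R p.2 p.1
      linarith
    have hpos := mmatrix_inv_pos s' B2 BW hB20 hB2spec hBW0 hBWB2 (vecm X) (vecm R)
      (fun p => hR0 p.2 p.1) hveceq
    intro i j
    exact hpos (j, i)
  -- Fop of G
  have hGFop : Fop N A G = G := hGsol
  -- single Newton–Shamanskii step
  have hstep : ∀ (W Y Z : Matrix (Fin m) (Fin m) ℝ),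
      (∀ i j, 0 ≤ W i j) → (∀ i j, W i j ≤ G i j) →
      (∀ i j, 0 ≤ Y i j) → (∀ i j, Y i j ≤ G i j) →
      (∀ i j, 0 ≤ (Fop N A Y - Y) i j) → (∀ i j, W i j ≤ Y i j) →
      (Lop N A W (Z - Y) - (Z - Y) = -(Fop N A Y - Y)) →
      ((∀ i j, Y i j ≤ Z i j) ∧ (∀ i j, Z i j ≤ G i j) ∧
        (∀ i j, 0 ≤ (Fop N A Z - Z) i j)) := by
    intro W Y Z hW0 hWG hY0 hYG hYF hWY hE
    set X := Z - Y with hXdef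
    have hXeq : X - Lop N A W X = Fop N A Y - Y := by
      rw [← neg_neg (Fop N A Y - Y), ← hE]; abel
    have hXeq' : ∀ i j, X i j - Lop N A W X i j = Fop N A Y i j - Y i j := by
      intro i j
      have h2 : (X - Lop N A W X) i j = (Fop N A Y - Y) i j := by rw [hXeq]
      simpa [Matrix.sub_apply] using h2
    have hX0 : ∀ i j, 0 ≤ X i j := hsolve W X (Fop N A Y - Y) hW0 hWG hYF hXeq
    have hYZ : ∀ i j, Y i j ≤ Z i j := by
      intro i j
      have := hX0 i j
      simp only [hXdef, Matrix.sub_apply] at this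
      linarith
    have hZ0 : ∀ i j, 0 ≤ Z i j := fun i j => (hY0 i j).trans (hYZ i j)
    -- Z ≤ G
    have hZG : ∀ i j, Z i j ≤ G i j := by
      set D := G - Y with hDdef
      have hD0 : ∀ i j, 0 ≤ D i j := by
        intro i j
        simp only [hDdef, Matrix.sub_apply]
        linarith [hYG i j]
      have hFGexp : ∀ i j, Fop N A Y i j + Lop N A Y D i j ≤ G i j := by
        intro i j
        have h1 := Fop_expand hA hY0 hD0 i j
        have h2 : Y + D = G := by rw [hDdef]; abel
        rw [h2, hGFop] at h1
        simpa [Matrix.add_apply] using h1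
      have hLWD : ∀ i j, Lop N A W D i j ≤ Lop N A Y D i j := Lop_mono_W hA1 hW0 hWY hD0
      have hR2 : ∀ i j, 0 ≤ ((D - X) - Lop N A W (D - X)) i j := by
        intro i j
        rw [Lop_sub]
        simp only [Matrix.sub_apply, hDdef]
        have h3 := hXeq' i j
        have h4 := hFGexp i j
        have h5 := hLWD i j
        linarith
      have hDX := hsolve W (D - X) ((D - X) - Lop N A W (D - X)) hW0 hWG hR2 rfl
      intro i j
      have := hDX i j
      simp only [Matrix.sub_apply, hDdef, hXdef] at this
      linarith
    -- 0 ≤ Fop Z - Z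
    refine ⟨hYZ, hZG, ?_⟩
    intro i j
    have hZYX : Y + X = Z := by rw [hXdef]; abel
    have h1 := Fop_expand hA hY0 hX0 i j
    rw [hZYX] at h1
    have h2 : Lop N A W X i j ≤ Lop N A Y X i j := Lop_mono_W hA1 hW0 hWY hX0 i j
    have h3 := hXeq' i j
    have h4 : Z i j = Y i j + X i j := by rw [← hZYX, Matrix.add_apply]
    simp only [Matrix.sub_apply]
    linarith
  -- inner induction along a cycle
  have hinner : ∀ k, (∀ i j, 0 ≤ Gs k 0 i j) → (∀ i j, Gs k 0 i j ≤ G i j) →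
      (∀ i j, 0 ≤ (Fop N A (Gs k 0) - Gs k 0) i j) →
      ∀ s, s ≤ n k →
        ((∀ i j, 0 ≤ Gs k s i j) ∧ (∀ i j, Gs k s i j ≤ G i j) ∧
         (∀ i j, 0 ≤ (Fop N A (Gs k s) - Gs k s) i j) ∧
         (∀ i j, Gs k 0 i j ≤ Gs k s i j) ∧
         (1 ≤ s → ∀ i j, Gs k 1 i j ≤ Gs k s i j)) := by
    intro k h0 hG' hF' s
    induction s with
    | zero =>
        intro _
        exact ⟨h0, hG', hF', fun i j => le_refl _, fun h => absurd h (by omega)⟩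
    | succ s ih =>
        intro hs
        have hsle : s ≤ n k := by omega
        obtain ⟨hY0, hYG, hYF, hWY, h1Y⟩ := ih hsle
        have hE := heq k (s + 1) (by omega) hs
        simp only [Nat.add_sub_cancel] at hE
        obtain ⟨hYZ, hZG, hZF⟩ :=
          hstep (Gs k 0) (Gs k s) (Gs k (s + 1)) h0 hG' hY0 hYG hYF hWY hE
        refine ⟨fun i j => (hY0 i j).trans (hYZ i j), hZG, hZF,
          fun i j => (hWY i j).trans (hYZ i j), fun _ i j => ?_⟩
        rcases Nat.eq_zero_or_pos s with h | h
        · subst h; exact le_refl _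
        · exact (h1Y h i j).trans (hYZ i j)
  -- outer induction
  have houter : ∀ k, (∀ i j, 0 ≤ Gs k 0 i j) ∧ (∀ i j, Gs k 0 i j ≤ G i j) ∧
      (∀ i j, 0 ≤ (Fop N A (Gs k 0) - Gs k 0) i j) := by
    intro k
    induction k with
    | zero => exact ⟨hG00', hG00'', hG00⟩
    | succ k ih =>
        obtain ⟨h0, hG', hF'⟩ := ih
        obtain ⟨a, b, c, _, _⟩ := hinner k h0 hG' hF' (n k) (le_refl _)
        rw [hlink k]
        exact ⟨a, b, c⟩
  have hmonok : ∀ k, ∀ i j, Gs k 0 i j ≤ Gs (k + 1) 0 i j := by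
    intro k i j
    obtain ⟨h0, hG', hF'⟩ := houter k
    obtain ⟨_, _, _, d, _⟩ := hinner k h0 hG' hF' (n k) (le_refl _)
    rw [hlink k]
    exact d i j
  -- entrywise limits
  set L : Matrix (Fin m) (Fin m) ℝ := Matrix.of fun i j => ⨆ k, Gs k 0 i j with hLdef
  have hmono : ∀ i j, Monotone fun k => Gs k 0 i j := fun i j =>
    monotone_nat_of_le_succ fun k => hmonok k i j
  have hbdd : ∀ i j, BddAbove (Set.range fun k => Gs k 0 i j) := fun i j =>
    ⟨G i j, by rintro y ⟨k, rfl⟩; exact (houter k).2.1 i j⟩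
  have htendL : ∀ i j, Filter.Tendsto (fun k => Gs k 0 i j) Filter.atTop (nhds (L i j)) :=
    fun i j => tendsto_atTop_ciSup (hmono i j) (hbdd i j)
  have hL0 : ∀ i j, 0 ≤ L i j := fun i j =>
    (hG00' i j).trans (le_ciSup (hbdd i j) 0)
  have hLG : ∀ i j, L i j ≤ G i j := fun i j => ciSup_le fun k => (houter k).2.1 i j
  -- the residual is squeezed to zero
  have hX1 : ∀ k, ∀ i j, (Fop N A (Gs k 0) - Gs k 0) i j ≤ Gs (k + 1) 0 i j - Gs k 0 i j := by
    intro k i j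
    obtain ⟨h0, hG', hF'⟩ := houter k
    have h1k : (1 : ℕ) ≤ n k := hn k
    have hE := heq k 1 (le_refl 1) h1k
    simp only [Nat.sub_self] at hE
    have hE' : Lop N A (Gs k 0) (Gs k 1 - Gs k 0) - (Gs k 1 - Gs k 0)
        = -(Fop N A (Gs k 0) - Gs k 0) := hE
    set X := Gs k 1 - Gs k 0 with hXdef
    have hXeq : ∀ i j, X i j - Lop N A (Gs k 0) X i j
        = Fop N A (Gs k 0) i j - Gs k 0 i j := by
      intro i j
      have h2 : X - Lop N A (Gs k 0) X = Fop N A (Gs k 0) - Gs k 0 := by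
        rw [← neg_neg (Fop N A (Gs k 0) - Gs k 0), ← hE']; abel
      have h3 : (X - Lop N A (Gs k 0) X) i j = (Fop N A (Gs k 0) - Gs k 0) i j := by rw [h2]
      simpa [Matrix.sub_apply] using h3
    obtain ⟨_, _, _, d1, _⟩ := hinner k h0 hG' hF' 1 h1k
    have hX0 : ∀ i j, 0 ≤ X i j := by
      intro i j
      simp only [hXdef, Matrix.sub_apply]
      linarith [d1 i j]
    have hLn := Lop_nonneg hA1 h0 hX0 i j
    obtain ⟨_, _, _, _, e⟩ := hinner k h0 hG' hF' (n k) (le_refl _)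
    have h5 : Gs k 1 i j ≤ Gs k (n k) i j := e h1k i j
    have h6 := hXeq i j
    rw [hlink k]
    simp only [Matrix.sub_apply]
    simp only [hXdef, Matrix.sub_apply] at h6
    linarith
  have hFtend0 : ∀ i j,
      Filter.Tendsto (fun k => (Fop N A (Gs k 0) - Gs k 0) i j) Filter.atTop (nhds 0) := by
    intro i j
    have hupper : Filter.Tendsto (fun k => Gs (k + 1) 0 i j - Gs k 0 i j)
        Filter.atTop (nhds 0) := by
      have h1 : Filter.Tendsto (fun k => Gs (k + 1) 0 i j) Filter.atTop (nhds (L i j)) :=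
        (htendL i j).comp (Filter.tendsto_add_atTop_nat 1)
      simpa using h1.sub (htendL i j)
    refine tendsto_of_tendsto_of_tendsto_of_le_of_le tendsto_const_nhds hupper ?_ ?_
    · intro k; exact (houter k).2.2 i j
    · intro k; exact hX1 k i j
  -- continuity
  have hcont : Continuous fun Xm : Matrix (Fin m) (Fin m) ℝ => Fop N A Xm - Xm := by
    apply Continuous.sub
    · show Continuous fun Xm : Matrix (Fin m) (Fin m) ℝ =>
        ∑ v ∈ Finset.range (N + 1), A v * Xm ^ v
      refine continuous_finset_sum _ fun v _ => ?_
      exact continuous_const.mul (continuous_pow v)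
    · exact continuous_id
  have htendLmat : Filter.Tendsto (fun k => Gs k 0) Filter.atTop (nhds L) := by
    refine tendsto_pi_nhds.mpr fun i => tendsto_pi_nhds.mpr fun j => ?_
    exact htendL i j
  have hFtendL : ∀ i j, Filter.Tendsto (fun k => (Fop N A (Gs k 0) - Gs k 0) i j)
      Filter.atTop (nhds ((Fop N A L - L) i j)) := by
    intro i j
    have h1 := (hcont.tendsto L).comp htendLmat
    exact (tendsto_pi_nhds.mp (tendsto_pi_nhds.mp h1 i) j)
  have hLsol : Fop N A L = L := by
    ext i j
    have h1 := tendsto_nhds_unique (hFtendL i j) (hFtend0 i j)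
    simp only [Matrix.sub_apply] at h1
    linarith
  have hGL := hGmin L hL0 hLsol
  intro i j
  have heqL : L i j = G i j := le_antisymm (hLG i j) (hGL i j)
  rw [← heqL]
  exact htendL i j
end

section
/- Suppose A_0 = Â_0 Γ where Â_0 is an m×r matrix and Γ is an r×m matrix. Let G_k and G_{k,s-1} be m×m matrices that factor as G_k = Ĝ_k Γ and G_{k,s-1} = Ĝ_{k,s-1} Γ for some m×r matrices Ĝ_k, Ĝ_{k,s-1}, and suppose I − Σ_{v=1}^{N} A_v G_k^{v-1} is invertible. If the m×m matrix X satisfies X − Σ_{j=0}^{N-1} Σ_{v=j+1}^{N} A_v G_k^{v-1-j} X G_k^{j} = Σ_{v=0}^{N} A_v G_{k,s-1}^{v} − G_{k,s-1}, then there exists an m×r matrix X̂ such that X = X̂ Γ. -/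
open Matrix Finset

theorem stmt14 (m r N : ℕ) (hm : 1 ≤ m) (hr : 1 ≤ r) (hN : 1 ≤ N)
    (A : ℕ → Matrix (Fin m) (Fin m) ℝ)
    (hA : ∀ v, v ≤ N → ∀ i j, 0 ≤ A v i j)
    (Ahat0 : Matrix (Fin m) (Fin r) ℝ) (Γ : Matrix (Fin r) (Fin m) ℝ)
    (hA0 : A 0 = Ahat0 * Γ)
    (Gk Gks : Matrix (Fin m) (Fin m) ℝ)
    (Ghatk Ghatks : Matrix (Fin m) (Fin r) ℝ)
    (hGk : Gk = Ghatk * Γ) (hGks : Gks = Ghatks * Γ)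
    (hinv : IsUnit ((1 : Matrix (Fin m) (Fin m) ℝ) - ∑ v ∈ Finset.Icc 1 N, A v * Gk ^ (v - 1)))
    (X : Matrix (Fin m) (Fin m) ℝ)
    (hX : X - ∑ j ∈ Finset.range N, ∑ v ∈ Finset.Icc (j + 1) N,
        A v * Gk ^ (v - 1 - j) * X * Gk ^ j =
      ∑ v ∈ Finset.range (N + 1), A v * Gks ^ v - Gks) :
    ∃ Xhat : Matrix (Fin m) (Fin r) ℝ, X = Xhat * Γ := by
  set B : Matrix (Fin m) (Fin m) ℝ := ∑ v ∈ Finset.Icc 1 N, A v * Gk ^ (v - 1) with hB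
  let S : Submodule ℝ (Matrix (Fin m) (Fin m) ℝ) :=
    { carrier := {M | ∃ Y : Matrix (Fin m) (Fin r) ℝ, M = Y * Γ}
      add_mem' := by rintro a b ⟨Ya, rfl⟩ ⟨Yb, rfl⟩; exact ⟨Ya + Yb, (Matrix.add_mul _ _ _).symm⟩
      zero_mem' := ⟨0, (Matrix.zero_mul _).symm⟩
      smul_mem' := by rintro c a ⟨Y, rfl⟩; exact ⟨c • Y, (Matrix.smul_mul c Y Γ).symm⟩ }
  have hmul : ∀ (C M : Matrix (Fin m) (Fin m) ℝ), M ∈ S → C * M ∈ S := by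
    rintro C M ⟨Y, rfl⟩; exact ⟨C * Y, (Matrix.mul_assoc _ _ _).symm⟩
  have hGkpow : ∀ (M : Matrix (Fin m) (Fin m) ℝ) (j : ℕ), M * Gk ^ (j + 1) ∈ S := by
    intro M j
    refine ⟨M * Gk ^ j * Ghatk, ?_⟩
    rw [pow_succ, ← mul_assoc, hGk, ← Matrix.mul_assoc]
  have hGkspow : ∀ (M : Matrix (Fin m) (Fin m) ℝ) (j : ℕ), M * Gks ^ (j + 1) ∈ S := by
    intro M j
    refine ⟨M * Gks ^ j * Ghatks, ?_⟩
    rw [pow_succ, ← mul_assoc, hGks, ← Matrix.mul_assoc]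
  obtain ⟨n, rfl⟩ : ∃ n, N = n + 1 := ⟨N - 1, by omega⟩
  -- The right-hand side is in S
  have hR : (∑ v ∈ Finset.range (n + 1 + 1), A v * Gks ^ v - Gks) ∈ S := by
    refine S.sub_mem ?_ ⟨Ghatks, hGks⟩
    rw [Finset.sum_range_succ']
    refine S.add_mem (S.sum_mem fun v _ => hGkspow _ _) ?_
    exact ⟨Ahat0, by simp [hA0]⟩
  -- Split off the j = 0 term of the double sum
  have hsplit : ∑ j ∈ Finset.range (n + 1), ∑ v ∈ Finset.Icc (j + 1) (n + 1),
      A v * Gk ^ (v - 1 - j) * X * Gk ^ j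
      = (∑ j ∈ Finset.range n, ∑ v ∈ Finset.Icc (j + 1 + 1) (n + 1),
          A v * Gk ^ (v - 1 - (j + 1)) * X * Gk ^ (j + 1)) + B * X := by
    rw [Finset.sum_range_succ']
    congr 1
    rw [hB, Finset.sum_mul]
    apply Finset.sum_congr rfl
    intro v hv
    simp
  have hkey : ((1 : Matrix (Fin m) (Fin m) ℝ) - B) * X ∈ S := by
    have : ((1 : Matrix (Fin m) (Fin m) ℝ) - B) * X
        = (∑ j ∈ Finset.range n, ∑ v ∈ Finset.Icc (j + 1 + 1) (n + 1),
            A v * Gk ^ (v - 1 - (j + 1)) * X * Gk ^ (j + 1))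
          + (∑ v ∈ Finset.range (n + 1 + 1), A v * Gks ^ v - Gks) := by
      rw [sub_mul, one_mul, ← hX, hsplit]
      abel
    rw [this]
    refine S.add_mem (S.sum_mem fun j _ => S.sum_mem fun v _ => hGkpow _ _) hR
  have hXS : X ∈ S := by
    have hX2 : X = (↑(hinv.unit⁻¹) : Matrix (Fin m) (Fin m) ℝ) * (((1 : Matrix (Fin m) (Fin m) ℝ) - B) * X) := by
      rw [← mul_assoc, hinv.val_inv_mul, one_mul]
    rw [hX2]
    exact hmul _ _ hkey
  exact hXS
end

section
/- Let G be an m×m matrix satisfying G = Σ_{i=0}^{N} A_i G^{i}, set U = Σ_{i=1}^{N} A_i G^{i-1}, and suppose I − U is invertible. Then U satisfies the fixed-point equation U = Σ_{i=1}^{N} A_i ((I − U)^{-1} A_0)^{i-1}. -/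
open Matrix Finset

theorem stmt17 (m N : ℕ) (hm : 1 ≤ m) (hN : 1 ≤ N)
    (A : ℕ → Matrix (Fin m) (Fin m) ℝ)
    (hA : ∀ v, v ≤ N → ∀ i j, 0 ≤ A v i j)
    (G : Matrix (Fin m) (Fin m) ℝ)
    (hG : G = ∑ i ∈ Finset.range (N + 1), A i * G ^ i)
    (U : Matrix (Fin m) (Fin m) ℝ)
    (hU : U = ∑ i ∈ Finset.Icc 1 N, A i * G ^ (i - 1))
    (hinv : IsUnit ((1 : Matrix (Fin m) (Fin m) ℝ) - U)) :
    U = ∑ i ∈ Finset.Icc 1 N,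
      A i * (((1 : Matrix (Fin m) (Fin m) ℝ) - U)⁻¹ * A 0) ^ (i - 1) := by
  have hU' : U = ∑ i ∈ Finset.range N, A (1 + i) * G ^ i := by
    rw [hU, ← Finset.Ico_add_one_right_eq_Icc, Finset.sum_Ico_eq_sum_range]
    simp
  have hG' : G = A 0 + U * G := by
    conv_lhs => rw [hG]
    rw [Finset.sum_range_succ', hU', Finset.sum_mul]
    rw [add_comm]
    congr 1
    · simp
    · refine Finset.sum_congr rfl fun i _ => ?_
      rw [mul_assoc, ← pow_succ, add_comm 1 i]
  have hdet : IsUnit ((1 : Matrix (Fin m) (Fin m) ℝ) - U).det :=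
    (Matrix.isUnit_iff_isUnit_det _).mp hinv
  have hG2 : ((1 : Matrix (Fin m) (Fin m) ℝ) - U)⁻¹ * A 0 = G := by
    have h : ((1 : Matrix (Fin m) (Fin m) ℝ) - U) * G = A 0 := by
      rw [sub_mul, one_mul]
      nth_rewrite 1 [hG']
      exact add_sub_cancel_right _ _
    rw [← h, ← mul_assoc, Matrix.nonsing_inv_mul _ hdet, one_mul]
  rw [hG2]
  exact hU
end
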